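/- arXiv:2504.19608 — 7 statements merged into one kernel-verified Lean document; each statement's English description precedes it below -/
import Mathlib

section
/- Let G be the graph on V whose edge set consists of all edges contained in at least one of the i(i−1)/2 optimal i-vertex paths. Then every vertex of G has degree at least 3; that is, every vertex of V occurs consecutively with at least 3 distinct other vertices across the optimal paths. -/
open Finset

/-- The length of a path, given as a list of vertices, with respect to the
distance function `d`: the sum of `d` over consecutive entries. -/
def pathLen {V : Type*} (d : V → V → ℝ) (P : List V) : ℝ :=
  ((P.zip P.tail).map fun p => d p.1 p.2).sum

/-- A path (list of vertices) contains the edge `{x, y}` iff `x` and `y`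
occur consecutively in it (in either order). -/
def ContainsEdge {V : Type*} (P : List V) (x y : V) : Prop :=
  [x, y] <:+: P ∨ [y, x] <:+: P

/-- A Hamiltonian path of the whole (finite) vertex type `V` from `u` to `v`:
a duplicate-free list of all vertices starting at `u` and ending at `v`. -/
def IsHamPath {V : Type*} (P : List V) (u v : V) : Prop :=
  P.Nodup ∧ (∀ x : V, x ∈ P) ∧ P.head? = some u ∧ P.getLast? = some v


lemma ham_length {V : Type*} [Fintype V] [DecidableEq V] {P : List V}
    (hnd : P.Nodup) (hmem : ∀ x : V, x ∈ P) : P.length = Fintype.card V := by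
  have h : P.toFinset = Finset.univ :=
    Finset.eq_univ_iff_forall.mpr fun x => List.mem_toFinset.mpr (hmem x)
  rw [← List.toFinset_card_of_nodup hnd, h, Finset.card_univ]

lemma interior_neighbors {V : Type*} {P : List V} {u v w : V}
    (hnd : P.Nodup) (hhead : P.head? = some u) (hlast : P.getLast? = some v)
    (hw : w ∈ P) (hwu : w ≠ u) (hwv : w ≠ v) :
    ∃ x y, x ≠ y ∧ [x, w] <:+: P ∧ [w, y] <:+: P := by
  obtain ⟨s, t, rfl⟩ := List.append_of_mem hw
  rcases s.eq_nil_or_concat with rfl | ⟨s', x, rfl⟩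
  · simp at hhead; exact absurd hhead hwu
  simp only [List.concat_eq_append] at *
  rcases t with _ | ⟨y, t'⟩
  · rw [show s' ++ [x] ++ [w] = (s' ++ [x]) ++ [w] by simp, List.getLast?_concat] at hlast
    simp at hlast; exact absurd hlast hwv
  · refine ⟨x, y, ?_, ⟨s', y :: t', by simp⟩, ⟨s' ++ [x], t', by simp⟩⟩
    have hP : (s' ++ [x] ++ w :: y :: t').Nodup = (s' ++ (x :: w :: y :: t')).Nodup := by simp
    rw [hP] at hnd
    have nd3 : (x :: w :: y :: t').Nodup := ((List.suffix_append _ _).sublist).nodup hnd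
    simp only [List.nodup_cons, List.mem_cons] at nd3
    intro h; exact nd3.1 (Or.inr (Or.inl h))

lemma head_infix {V : Type*} {P : List V} {x v : V} (hnd : P.Nodup)
    (hhead : P.head? = some x) (h : [x, v] <:+: P) : ∃ t, P = x :: v :: t := by
  obtain ⟨s, t, heq⟩ := h
  rcases s with _ | ⟨a, s'⟩
  · exact ⟨t, by simpa using heq.symm⟩
  · exfalso
    subst heq
    simp only [List.cons_append, List.head?_cons, Option.some.injEq] at hhead
    subst hhead
    simp only [List.cons_append, List.nodup_cons] at hnd
    exact hnd.1 (by simp)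

lemma not_infix_head {V : Type*} {P : List V} {x z : V} (hnd : P.Nodup)
    (hhead : P.head? = some x) : ¬ [z, x] <:+: P := by
  intro h
  have hzx : z ≠ x := by
    have := (h.sublist).nodup hnd
    simp at this; exact this
  obtain ⟨s, t, heq⟩ := h
  rcases s with _ | ⟨a, s'⟩
  · subst heq; simp at hhead; exact hzx hhead
  · subst heq
    simp only [List.cons_append, List.head?_cons, Option.some.injEq] at hhead
    subst hhead
    simp only [List.cons_append, List.nodup_cons] at hnd
    exact hnd.1 (by simp)

lemma last_infix {V : Type*} {P : List V} {y v : V} (hnd : P.Nodup)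
    (hlast : P.getLast? = some y) (h : [v, y] <:+: P) : ∃ s, P = s ++ [v, y] := by
  have h' : [y, v] <:+: P.reverse := by
    rw [show [y,v] = ([v,y]).reverse by simp, List.reverse_infix]; exact h
  have hh : P.reverse.head? = some y := by rw [List.head?_reverse]; exact hlast
  obtain ⟨t, ht⟩ := head_infix (List.nodup_reverse.mpr hnd) hh h'
  refine ⟨t.reverse, ?_⟩
  have := congrArg List.reverse ht
  simpa using this

lemma not_infix_last {V : Type*} {P : List V} {y z : V} (hnd : P.Nodup)
    (hlast : P.getLast? = some y) : ¬ [y, z] <:+: P := by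
  intro h
  have h' : [z, y] <:+: P.reverse := by
    rw [show [z,y] = ([y,z]).reverse by simp, List.reverse_infix]; exact h
  have hh : P.reverse.head? = some y := by rw [List.head?_reverse]; exact hlast
  exact not_infix_head (List.nodup_reverse.mpr hnd) hh h'

lemma final_contra {V : Type*} {P : List V} {x v y : V} (hnd : P.Nodup) (hlen : 4 ≤ P.length)
    (h1 : ∃ t, P = x :: v :: t) (h2 : ∃ s, P = s ++ [v, y]) : False := by
  obtain ⟨t, rfl⟩ := h1
  obtain ⟨s, hs⟩ := h2
  rcases s with _ | ⟨a, s'⟩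
  · have := congrArg List.length hs
    simp at this hlen
    simp [this] at hlen
  rcases s' with _ | ⟨b, s''⟩
  · have := congrArg List.length hs
    simp at this hlen
    omega
  · simp only [List.cons_append, List.cons.injEq] at hs
    obtain ⟨-, -, ht⟩ := hs
    simp only [List.nodup_cons] at hnd
    exact hnd.2.1 (by rw [ht]; simp)

/-- In the graph on `V` whose edges are those contained in at
least one optimal `i`-vertex path, every vertex has degree at least `3`. -/
theorem stmt0 {V : Type*} [Fintype V] [DecidableEq V] (i : ℕ) (hi : 4 ≤ i)
    (hcard : Fintype.card V = i)
    (d : V → V → ℝ) (hdsymm : ∀ u v : V, d u v = d v u)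
    (hdpos : ∀ u v : V, u ≠ v → 0 < d u v)
    (OP : V → V → List V)
    (hOP : ∀ u v : V, u ≠ v → IsHamPath (OP u v) u v)
    (hOPmin : ∀ u v : V, u ≠ v → ∀ Q : List V, IsHamPath Q u v →
      pathLen d (OP u v) ≤ pathLen d Q)
    (hOPuniq : ∀ u v : V, u ≠ v → ∀ Q : List V, IsHamPath Q u v →
      pathLen d Q = pathLen d (OP u v) → Q = OP u v)
    (hOPsymm : ∀ u v : V, OP v u = (OP u v).reverse) :
    ∀ v : V,
      3 ≤ Nat.card {u : V // u ≠ v ∧ ∃ a b : V, a ≠ b ∧ ContainsEdge (OP a b) v u} := by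
  classical
  intro v
  have hrw : Nat.card {u : V // u ≠ v ∧ ∃ a b : V, a ≠ b ∧ ContainsEdge (OP a b) v u}
      = (Finset.univ.filter (fun u : V => u ≠ v ∧ ∃ a b : V, a ≠ b ∧ ContainsEdge (OP a b) v u)).card := by
    rw [Nat.card_eq_fintype_card, Fintype.card_subtype]
  rw [hrw]
  set S : Finset V := Finset.univ.filter
    (fun u : V => u ≠ v ∧ ∃ a b : V, a ≠ b ∧ ContainsEdge (OP a b) v u) with hS
  have hmemS : ∀ u : V, u ∈ S ↔ (u ≠ v ∧ ∃ a b : V, a ≠ b ∧ ContainsEdge (OP a b) v u) := by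
    intro u; rw [hS, Finset.mem_filter]; simp
  by_contra hcon
  push_neg at hcon
  -- pick a b distinct, both ≠ v
  have h2 : 1 < (Finset.univ.erase v).card := by
    rw [Finset.card_erase_of_mem (Finset.mem_univ v), Finset.card_univ, hcard]; omega
  obtain ⟨a, ha, b, hb, hab⟩ := Finset.one_lt_card.mp h2
  have hav : a ≠ v := (Finset.mem_erase.mp ha).1
  have hbv : b ≠ v := (Finset.mem_erase.mp hb).1
  obtain ⟨nd, mem, hh, hl⟩ := hOP a b hab
  obtain ⟨x, y, hxy, hx, hy⟩ := interior_neighbors nd hh hl (mem v) hav.symm hbv.symm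
  have hxv : x ≠ v := by
    have := (hx.sublist).nodup nd; simp at this; exact this
  have hyv : y ≠ v := by
    have := (hy.sublist).nodup nd; simp at this; exact (Ne.symm this)
  have px : x ∈ S := (hmemS x).mpr ⟨hxv, a, b, hab, Or.inr hx⟩
  have py : y ∈ S := (hmemS y).mpr ⟨hyv, a, b, hab, Or.inl hy⟩
  -- every element of p is x or y
  have hsub : ∀ u, u ∈ S → u = x ∨ u = y := by
    intro u hu'
    by_contra hcon2
    push_neg at hcon2
    have hss : ({x, y, u} : Finset V) ⊆ S := by
      intro z hz
      simp only [Finset.mem_insert, Finset.mem_singleton] at hz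
      rcases hz with rfl | rfl | rfl
      · exact px
      · exact py
      · exact hu'
    have h3 : ({x, y, u} : Finset V).card = 3 := by
      rw [Finset.card_insert_of_notMem (by simp [hxy, Ne.symm hcon2.1]),
        Finset.card_insert_of_notMem (by simp [Ne.symm hcon2.2]), Finset.card_singleton]
    have := Finset.card_le_card hss
    omega
  -- now consider OP x y
  obtain ⟨nd2, mem2, hh2, hl2⟩ := hOP x y hxy
  have hlen2 : 4 ≤ (OP x y).length := by rw [ham_length nd2 mem2, hcard]; exact hi
  obtain ⟨n1, n2, hn, h1, h2'⟩ := interior_neighbors nd2 hh2 hl2 (mem2 v) hxv.symm hyv.symm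
  have pn1 : n1 ∈ S := by
    refine (hmemS n1).mpr ⟨?_, x, y, hxy, Or.inr h1⟩
    have := (h1.sublist).nodup nd2; simp at this; exact this
  have pn2 : n2 ∈ S := by
    refine (hmemS n2).mpr ⟨?_, x, y, hxy, Or.inl h2'⟩
    have := (h2'.sublist).nodup nd2; simp at this; exact (Ne.symm this)
  have hn1 : n1 = x := by
    rcases hsub n1 pn1 with h | h
    · exact h
    · subst h; exact absurd h1 (not_infix_last nd2 hl2)
  have hn2 : n2 = y := by
    rcases hsub n2 pn2 with h | h
    · subst h; exact absurd h2' (not_infix_head nd2 hh2)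
    · exact h
  subst hn1; subst hn2
  exact final_contra nd2 hlen2 (head_infix nd2 hh2 h1) (last_infix nd2 hl2 h2')
end

section
/- For every vertex v ∈ V, the sum of the frequencies f({v,u}) over the i−1 edges {v,u} incident to v equals (i−1)². In particular the average frequency of the edges incident to a vertex is i−1. -/
/-!
An optimal path is Hamiltonian, so a vertex `v` has two neighbours on it, or only one when `v`
is an endpoint. Summing over the `C(i, 2)` pairs, of which exactly `i - 1` have `v` as an endpoint,
the frequencies of the edges at `v` add up to `2 C(i, 2) - (i - 1) = (i - 1)²`.
-/

open Finset

/-- The frequency of the (unordered) edge `e`: the number of unordered pairs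
`{u, v}` of distinct vertices whose optimal path `OP u v` contains `e`. -/
noncomputable def freq {V : Type*} (OP : V → V → List V) (e : Sym2 V) : ℕ :=
  Nat.card {p : Sym2 V // ¬ p.IsDiag ∧
    ∃ u v : V, p = s(u, v) ∧ ∃ x y : V, e = s(x, y) ∧ ContainsEdge (OP u v) x y}

section

variable {V : Type*}

theorem notMem_of_nodup_append_cons {L R : List V} {v : V} (hnd : (L ++ v :: R).Nodup) :
    v ∉ L ∧ v ∉ R := by
  rw [List.nodup_middle, List.nodup_cons, List.mem_append, not_or] at hnd
  exact hnd.1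

theorem containsEdge_reverse (P : List V) (x y : V) :
    ContainsEdge P.reverse x y ↔ ContainsEdge P x y := by
  simp only [ContainsEdge, ← List.reverse_infix (l₂ := P), List.reverse_cons, List.reverse_nil,
    List.nil_append, List.cons_append]
  exact or_comm

theorem pair_infix_append_cons_iff {L R : List V} {v u : V} (hnd : (L ++ v :: R).Nodup) :
    [v, u] <:+: L ++ v :: R ↔ R.head? = some u := by
  obtain ⟨hvL, hvR⟩ := notMem_of_nodup_append_cons hnd
  constructor
  · rintro ⟨s, t, h⟩
    have h' : L ++ v :: R = s ++ v :: u :: t := by simpa using h.symm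
    obtain ⟨-, -, rfl⟩ := (List.append_cons_inj_of_notMem hvL hvR).mp h'
    rfl
  · intro h
    obtain ⟨t, rfl⟩ := List.head?_eq_some_iff.mp h
    exact ⟨L, t, by simp⟩

theorem containsEdge_append_cons_iff {L R : List V} {v u : V} (hnd : (L ++ v :: R).Nodup) :
    ContainsEdge (L ++ v :: R) v u ↔ u ∈ L.getLast? ∨ u ∈ R.head? := by
  have hnd' : (R.reverse ++ v :: L.reverse).Nodup := by
    simpa using List.nodup_reverse.mpr hnd
  have hrev : [u, v] <:+: L ++ v :: R ↔ [v, u] <:+: R.reverse ++ v :: L.reverse := by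
    rw [← List.reverse_infix]; simp
  rw [ContainsEdge, hrev, pair_infix_append_cons_iff hnd, pair_infix_append_cons_iff hnd',
    List.head?_reverse, Option.mem_def, Option.mem_def, or_comm]

def PairUsesEdge (OP : V → V → List V) (x y : V) (p : Sym2 V) : Prop :=
  ∃ a b, p = s(a, b) ∧ ContainsEdge (OP a b) x y

variable [Fintype V] [DecidableEq V]

open Classical in
theorem card_filter_containsEdge {P : List V} {v : V} (hnd : P.Nodup) (hv : v ∈ P) :
    #{u ∈ univ.erase v | ContainsEdge P v u} =
      (if P.head? = some v then 0 else 1) + (if P.getLast? = some v then 0 else 1) := by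
  obtain ⟨L, R, rfl⟩ := List.append_of_mem hv
  obtain ⟨hvL, hvR⟩ := notMem_of_nodup_append_cons hnd
  have hfilter : {u ∈ univ.erase v | ContainsEdge (L ++ v :: R) v u} =
      L.getLast?.toFinset ∪ R.head?.toFinset := by
    ext u
    simp only [mem_filter, mem_erase, mem_univ, and_true, containsEdge_append_cons_iff hnd,
      mem_union, Option.mem_toFinset]
    refine ⟨And.right, fun h => ⟨?_, h⟩⟩
    rintro rfl
    exact h.elim (fun h => hvL (List.mem_of_mem_getLast? h))
      (fun h => hvR (List.mem_of_mem_head? h))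
  rw [hfilter, card_union_of_disjoint, Option.card_toFinset, Option.card_toFinset]
  · congr 1
    · cases L with
      | nil => simp
      | cons c L' => simp [List.getLast?_cons, Ne.symm (List.ne_of_not_mem_cons hvL)]
    · rcases List.eq_nil_or_concat R with rfl | ⟨R', r, rfl⟩
      · simp
      · have hrv : r ≠ v := by rintro rfl; simp at hvR
        simp [List.getLast?_cons, List.getLast?_append, hrv]
  · exact disjoint_left.mpr fun u hL hR => List.disjoint_of_nodup_append hnd
      (List.mem_of_mem_getLast? (Option.mem_toFinset.mp hL))
      (List.mem_cons_of_mem v (List.mem_of_mem_head? (Option.mem_toFinset.mp hR)))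

open Classical in
theorem freq_mk_eq_card (OP : V → V → List V) (x y : V) :
    freq OP s(x, y) = #{p ∈ (⊤ : SimpleGraph V).edgeFinset | PairUsesEdge OP x y p} := by
  rw [freq, Nat.card_eq_fintype_card, Fintype.card_subtype]
  congr 1
  ext e
  rw [mem_filter, mem_filter]
  simp only [PairUsesEdge, mem_univ, true_and, SimpleGraph.mem_edgeFinset, SimpleGraph.edgeSet_top,
    Set.mem_compl_iff, Sym2.mem_diagSet]
  refine and_congr_right fun _ => exists₂_congr fun a b => and_congr_right fun _ => ?_
  refine ⟨?_, fun h => ⟨x, y, rfl, h⟩⟩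
  rintro ⟨x', y', hxy, h⟩
  rcases Sym2.eq_iff.mp hxy with ⟨rfl, rfl⟩ | ⟨rfl, rfl⟩
  · exact h
  · exact Or.symm h

theorem sum_edgeFinset_top_ite_mem (v : V) :
    ∑ e ∈ (⊤ : SimpleGraph V).edgeFinset, (if v ∈ e then 1 else 2) =
      (Fintype.card V - 1) ^ 2 := by
  have hinc : #{e ∈ (⊤ : SimpleGraph V).edgeFinset | v ∈ e} = Fintype.card V - 1 := by
    rw [← SimpleGraph.incidenceFinset_eq_filter, SimpleGraph.card_incidenceFinset_eq_degree]
    exact SimpleGraph.complete_graph_degree v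
  have hsplit := card_filter_add_card_filter_not (s := (⊤ : SimpleGraph V).edgeFinset) (v ∈ ·)
  rw [SimpleGraph.card_edgeFinset_top_eq_card_choose_two, hinc] at hsplit
  rw [sum_ite, sum_const, sum_const, smul_eq_mul, smul_eq_mul, hinc]
  have : Nonempty V := ⟨v⟩
  obtain ⟨n, hn⟩ := Nat.exists_eq_succ_of_ne_zero (Fintype.card_ne_zero (α := V))
  rw [hn, Nat.succ_sub_one] at hsplit ⊢
  have hsplitℚ := congrArg (Nat.cast : ℕ → ℚ) hsplit
  push_cast [Nat.cast_choose_two] at hsplitℚ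
  exact_mod_cast
    (show (n : ℚ) * 1 + #{e ∈ (⊤ : SimpleGraph V).edgeFinset | v ∉ e} * 2 = n ^ 2 by
      linear_combination 2 * hsplitℚ)

variable {OP : V → V → List V}

open Classical in
theorem card_filter_pairUsesEdge (hOP : ∀ u v, u ≠ v → IsHamPath (OP u v) u v)
    (hOPsymm : ∀ u v, OP v u = (OP u v).reverse) {e : Sym2 V}
    (he : e ∈ (⊤ : SimpleGraph V).edgeFinset) (v : V) :
    #{u ∈ univ.erase v | PairUsesEdge OP v u e} = if v ∈ e then 1 else 2 := by
  induction e using Sym2.ind with | _ a b =>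
  have hab : a ≠ b := by simpa using he
  have hiff : ∀ u, PairUsesEdge OP v u s(a, b) ↔ ContainsEdge (OP a b) v u := by
    refine fun u => ⟨?_, fun h => ⟨a, b, rfl, h⟩⟩
    rintro ⟨a', b', he', h⟩
    rcases Sym2.eq_iff.mp he' with ⟨rfl, rfl⟩ | ⟨rfl, rfl⟩
    · exact h
    · rwa [hOPsymm, containsEdge_reverse] at h
  obtain ⟨hnd, hmem, hhead, hlast⟩ := hOP a b hab
  rw [filter_congr fun u _ => hiff u, card_filter_containsEdge hnd (hmem v), hhead, hlast]
  simp only [Option.some_inj, Sym2.mem_iff]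
  split_ifs <;> grind

theorem sum_freq_incident_eq (hOP : ∀ u v, u ≠ v → IsHamPath (OP u v) u v)
    (hOPsymm : ∀ u v, OP v u = (OP u v).reverse) (v : V) :
    ∑ u ∈ univ.erase v, freq OP s(v, u) = (Fintype.card V - 1) ^ 2 := by
  classical
  calc ∑ u ∈ univ.erase v, freq OP s(v, u)
      = ∑ u ∈ univ.erase v,
          #((⊤ : SimpleGraph V).edgeFinset.bipartiteAbove (PairUsesEdge OP v) u) :=
        sum_congr rfl fun u _ => freq_mk_eq_card OP v u
    _ = ∑ e ∈ (⊤ : SimpleGraph V).edgeFinset,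
          #((univ.erase v).bipartiteBelow (PairUsesEdge OP v) e) :=
        sum_card_bipartiteAbove_eq_sum_card_bipartiteBelow _
    _ = ∑ e ∈ (⊤ : SimpleGraph V).edgeFinset, if v ∈ e then 1 else 2 :=
        sum_congr rfl fun e he => card_filter_pairUsesEdge hOP hOPsymm he v
    _ = (Fintype.card V - 1) ^ 2 := sum_edgeFinset_top_ite_mem v

end

theorem stmt2_general {V : Type*} [Fintype V] [DecidableEq V] (i : ℕ)
    (hcard : Fintype.card V = i)
    (OP : V → V → List V)
    (hOP : ∀ u v : V, u ≠ v → IsHamPath (OP u v) u v)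
    (hOPsymm : ∀ u v : V, OP v u = (OP u v).reverse) :
    ∀ v : V,
      (∑ u ∈ Finset.univ.erase v, freq OP s(v, u)) = (i - 1) ^ 2 ∧
      (∑ u ∈ Finset.univ.erase v, (freq OP s(v, u) : ℚ)) / ((i : ℚ) - 1)
        = (i : ℚ) - 1 := by
  intro v
  subst hcard
  have hsum := sum_freq_incident_eq hOP hOPsymm v
  refine ⟨hsum, ?_⟩
  rw [← Nat.cast_sum, hsum, Nat.cast_pow, Nat.cast_pred (Fintype.card_pos_iff.mpr ⟨v⟩), sq,
    mul_self_div_self]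

/-- For every vertex `v`, the frequencies of the `i - 1` edges
incident to `v` sum to `(i - 1)²`; in particular their average is `i - 1`. -/
theorem stmt2 {V : Type*} [Fintype V] [DecidableEq V] (i : ℕ) (hi : 4 ≤ i)
    (hcard : Fintype.card V = i)
    (d : V → V → ℝ) (hdsymm : ∀ u v : V, d u v = d v u)
    (hdpos : ∀ u v : V, u ≠ v → 0 < d u v)
    (OP : V → V → List V)
    (hOP : ∀ u v : V, u ≠ v → IsHamPath (OP u v) u v)
    (hOPmin : ∀ u v : V, u ≠ v → ∀ Q : List V, IsHamPath Q u v →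
      pathLen d (OP u v) ≤ pathLen d Q)
    (hOPuniq : ∀ u v : V, u ≠ v → ∀ Q : List V, IsHamPath Q u v →
      pathLen d Q = pathLen d (OP u v) → Q = OP u v)
    (hOPsymm : ∀ u v : V, OP v u = (OP u v).reverse) :
    ∀ v : V,
      (∑ u ∈ Finset.univ.erase v, freq OP s(v, u)) = (i - 1) ^ 2 ∧
      (∑ u ∈ Finset.univ.erase v, (freq OP s(v, u) : ℚ)) / ((i : ℚ) - 1)
        = (i : ℚ) - 1 :=
  stmt2_general i hcard OP hOP hOPsymm
end

section
/- Every edge e of K_i satisfies f(e) ≤ i(i−1)/2 − 1; that is, each edge is excluded from at least one optimal i-vertex path, namely from the optimal path whose two endpoints are the endpoints of e. -/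
open Finset

/-
A Hamiltonian path from `x` to `y` starts at `x` and ends at `y`, and visits each vertex once, so
the only way `x` and `y` can be consecutive on it is when the path is `[x, y]`, i.e. when there are
just two vertices. With at least three vertices, the edge `{x, y}` therefore misses `OP x y`, and so
at most `i(i-1)/2 - 1` of the `i(i-1)/2` optimal paths contain it.
-/

namespace List

variable {α : Type*}

theorem Nodup.eq_nil_of_head?_eq {s l : List α} {a : α} (hn : (s ++ a :: l).Nodup)
    (hh : (s ++ a :: l).head? = some a) : s = [] := by
  cases s with
  | nil => rfl
  | cons b s =>
    obtain rfl : b = a := by simpa using hh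
    exact absurd (mem_append_right s mem_cons_self) (nodup_cons.mp hn).1

theorem Nodup.eq_nil_of_getLast?_eq {l t : List α} {a : α} (hn : (l ++ a :: t).Nodup)
    (hl : (l ++ a :: t).getLast? = some a) : t = [] := by
  have hrev : (l ++ a :: t).reverse = t.reverse ++ a :: l.reverse := by simp
  rw [← nodup_reverse, hrev] at hn
  rw [← head?_reverse, hrev] at hl
  exact reverse_eq_nil_iff.mp (hn.eq_nil_of_head?_eq hl)

end List

section

variable {V : Type*}

theorem containsEdge_congr {P : List V} {x y x' y' : V} (h : s(x, y) = s(x', y')) :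
    ContainsEdge P x y ↔ ContainsEdge P x' y' := by
  rcases Sym2.eq_iff.mp h with ⟨rfl, rfl⟩ | ⟨rfl, rfl⟩
  · rfl
  · exact or_comm

theorem length_eq_two_of_containsEdge {P : List V} {u v : V} (hn : P.Nodup)
    (hh : P.head? = some u) (hl : P.getLast? = some v) (he : ContainsEdge P u v) :
    P.length = 2 := by
  rcases he with ⟨s, t, rfl⟩ | ⟨s, t, rfl⟩
  · have hn' : (s ++ u :: v :: t).Nodup := by simpa using hn
    obtain rfl : s = [] := hn'.eq_nil_of_head?_eq (by simpa using hh)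
    replace hn' : ([u] ++ v :: t).Nodup := by simpa using hn
    obtain rfl : t = [] := hn'.eq_nil_of_getLast?_eq (by simpa using hl)
    rfl
  · have hn' : ((s ++ [v]) ++ u :: t).Nodup := by simpa using hn
    exact absurd (hn'.eq_nil_of_head?_eq (by simpa using hh)) (by simp)

theorem IsHamPath.length_eq_card [Fintype V] {P : List V} {u v : V} (hP : IsHamPath P u v) :
    P.length = Fintype.card V := by
  classical
  simpa using Fintype.card_congr (hP.1.getEquivOfForallMemList P hP.2.1)

theorem IsHamPath.not_containsEdge [Fintype V] {P : List V} {u v : V} (hP : IsHamPath P u v)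
    (hV : 3 ≤ Fintype.card V) : ¬ ContainsEdge P u v := fun he => by
  have := length_eq_two_of_containsEdge hP.1 hP.2.2.1 hP.2.2.2 he
  rw [hP.length_eq_card] at this
  omega

theorem freq_le_choose_two_sub_one [Fintype V] (OP : V → V → List V) {e : Sym2 V}
    (he : ¬ e.IsDiag) (hexcl : ∀ u v : V, s(u, v) = e → ¬ ContainsEdge (OP u v) u v) :
    freq OP e ≤ (Fintype.card V).choose 2 - 1 := by
  classical
  have hsub : {p : Sym2 V | ¬ p.IsDiag ∧ ∃ u v : V, p = s(u, v) ∧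
      ∃ x y : V, e = s(x, y) ∧ ContainsEdge (OP u v) x y} ⊆ {p | ¬ p.IsDiag} \ {e} := by
    rintro p ⟨hp, u, v, rfl, x, y, rfl, hc⟩
    refine ⟨hp, fun hpe => hexcl u v hpe ?_⟩
    rwa [containsEdge_congr hpe]
  calc freq OP e ≤ ({p : Sym2 V | ¬ p.IsDiag} \ {e}).ncard :=
        (Nat.card_coe_set_eq _).trans_le (Set.ncard_le_ncard hsub)
    _ = {p : Sym2 V | ¬ p.IsDiag}.ncard - 1 := Set.ncard_sdiff_singleton_of_mem he
    _ = (Fintype.card V).choose 2 - 1 := by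
      rw [← Nat.card_coe_set_eq, Set.coe_ofPred, Nat.card_eq_fintype_card,
        Sym2.card_subtype_not_diag]

end

theorem stmt4_general {V : Type*} [Fintype V] (i : ℕ) (hi : 4 ≤ i)
    (hcard : Fintype.card V = i)
    (OP : V → V → List V)
    (hOP : ∀ u v : V, u ≠ v → IsHamPath (OP u v) u v) :
    ∀ x y : V, x ≠ y →
      ¬ ContainsEdge (OP x y) x y ∧ freq OP s(x, y) ≤ i * (i - 1) / 2 - 1 := by
  intro x y hxy
  have hV : 3 ≤ Fintype.card V := by omega
  refine ⟨(hOP x y hxy).not_containsEdge hV, ?_⟩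
  have he : ¬ s(x, y).IsDiag := Sym2.mk_isDiag_iff.not.mpr hxy
  have hexcl : ∀ u v : V, s(u, v) = s(x, y) → ¬ ContainsEdge (OP u v) u v := fun u v huv =>
    (hOP u v fun h => he (huv ▸ Sym2.mk_isDiag_iff.mpr h)).not_containsEdge hV
  simpa [hcard, Nat.choose_two_right] using freq_le_choose_two_sub_one OP he hexcl

/-- Every edge has frequency at most `i(i-1)/2 - 1`: it is
excluded from the optimal path whose two endpoints are its own endpoints. -/
theorem stmt4 {V : Type*} [Fintype V] [DecidableEq V] (i : ℕ) (hi : 4 ≤ i)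
    (hcard : Fintype.card V = i)
    (d : V → V → ℝ) (hdsymm : ∀ u v : V, d u v = d v u)
    (hdpos : ∀ u v : V, u ≠ v → 0 < d u v)
    (OP : V → V → List V)
    (hOP : ∀ u v : V, u ≠ v → IsHamPath (OP u v) u v)
    (hOPmin : ∀ u v : V, u ≠ v → ∀ Q : List V, IsHamPath Q u v →
      pathLen d (OP u v) ≤ pathLen d Q)
    (hOPuniq : ∀ u v : V, u ≠ v → ∀ Q : List V, IsHamPath Q u v →
      pathLen d Q = pathLen d (OP u v) → Q = OP u v)
    (hOPsymm : ∀ u v : V, OP v u = (OP u v).reverse) :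
    ∀ x y : V, x ≠ y →
      ¬ ContainsEdge (OP x y) x y ∧ freq OP s(x, y) ≤ i * (i - 1) / 2 - 1 :=
  stmt4_general i hi hcard OP hOP
end

section
/- Every ordinary edge g satisfies f(g) ≤ i(i−1)/2 − i − 1: g is contained in none of the i optimal paths whose endpoints are cyclically consecutive on the OHC (these are the paths obtained by deleting one edge of the OHC), and g is also not contained in the optimal path whose two endpoints are the endpoints of g. -/
open Finset

/-- The length of the cycle obtained by closing up the list `C`. -/
def cycLen {V : Type*} (d : V → V → ℝ) (C : List V) : ℝ :=
  pathLen d (C ++ C.take 1)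

/-- A Hamiltonian cycle of the finite vertex type `V`, represented as a
duplicate-free list of all vertices (closed up cyclically). -/
def IsHamCycle {V : Type*} (C : List V) : Prop :=
  C.Nodup ∧ ∀ x : V, x ∈ C

/-- `x` and `y` are cyclically consecutive on the cycle (list) `C`. -/
def CycAdj {V : Type*} (C : List V) (x y : V) : Prop :=
  ContainsEdge (C ++ C.take 1) x y

/-!
Cutting the optimal Hamiltonian cycle at one of its edges `{u, v}` leaves a Hamiltonian
`u`–`v` path of length `len(OHC) - d(u, v)`. Closing the optimal path `OP(u, v)` with the
edge `{v, u}` therefore gives a Hamiltonian cycle no longer than the OHC, hence the OHC itself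
by uniqueness, so every edge of `OP(u, v)` is an OHC edge. Moreover a path through at least
three vertices never joins its own endpoints directly. So the `i` OHC edges and `g` itself are
`i + 1` distinct pairs whose optimal paths avoid `g`, among the `i(i-1)/2` pairs.
-/

namespace List

variable {α : Type*} {l : List α} {x y : α}

theorem exists_isRotated_cons (hx : x ∈ l) : ∃ r, l ~r x :: r := by
  obtain ⟨s, t, rfl⟩ := append_of_mem hx
  exact ⟨t ++ s, by simpa using isRotated_append (l := s) (l' := x :: t)⟩

variable [DecidableEq α]

theorem next_eq_of_pair_infix (hl : l.Nodup) (h : [x, y] <:+: l) :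
    l.next x (h.subset mem_cons_self) = y := by
  obtain ⟨s, t, rfl⟩ := h
  have hrot : s ++ [x, y] ++ t ~r x :: y :: (t ++ s) := by
    simpa using isRotated_append (l := s) (l' := x :: y :: t)
  rw [isRotated_next_eq hrot hl, next_cons_cons_eq]

theorem pair_infix_append_take_one_iff (hl : l.Nodup) :
    [x, y] <:+: l ++ l.take 1 ↔ ∃ hx : x ∈ l, l.next x hx = y := by
  rcases l with _ | ⟨a, t⟩
  · simp
  have hne : a :: t ≠ [] := cons_ne_nil a t
  rw [show (a :: t).take 1 = [a] from rfl, infix_concat_iff]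
  constructor
  · rintro (⟨s, hs⟩ | h)
    · obtain ⟨hlast, hya⟩ :=
        append_inj' (s₁ := s ++ [x]) (t₁ := [y]) (s₂ := a :: t) (t₂ := [a])
          (by simpa using hs) rfl
      obtain rfl : a = y := by simpa using hya.symm
      obtain rfl : (a :: t).getLast hne = x := by
        simpa [getLast?_eq_some_getLast hne] using (congrArg getLast? hlast).symm
      exact ⟨getLast_mem hne, next_getLast_eq_head _ hne hl⟩
    · exact ⟨_, next_eq_of_pair_infix hl h⟩
  · rintro ⟨hx, rfl⟩
    by_cases hdrop : x ∈ (a :: t).dropLast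
    · exact Or.inr (nextOr_infix_of_mem_dropLast hdrop _)
    · have hlast : x = (a :: t).getLast hne := by
        rw [← dropLast_append_getLast hne, mem_append] at hx
        simpa [hdrop] using hx
      subst hlast
      left
      rw [next_getLast_eq_head _ hne hl]
      exact ⟨(a :: t).dropLast, by
        rw [show [_, _] = [_] ++ [_] from rfl, ← append_assoc, dropLast_append_getLast]; rfl⟩

theorem next_ne_self (hl : l.Nodup) (h2 : 2 ≤ l.length) (hx : x ∈ l) : l.next x hx ≠ x := by
  obtain ⟨r, hr⟩ := exists_isRotated_cons hx
  obtain ⟨y, r, rfl⟩ : ∃ y r', r = y :: r' := by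
    have := hr.perm.length_eq; rcases r with _ | ⟨y, r'⟩ <;> simp_all
  rw [isRotated_next_eq hr hl, next_cons_cons_eq]
  exact fun hyx => by simpa [hyx] using hr.nodup_iff.1 hl

theorem next_next_ne_self (hl : l.Nodup) (h3 : 3 ≤ l.length) (hx : x ∈ l) :
    l.next (l.next x hx) (next_mem _ _ hx) ≠ x := by
  obtain ⟨r, hr⟩ := exists_isRotated_cons hx
  obtain ⟨y, z, r, rfl⟩ : ∃ y z r', r = y :: z :: r' := by
    have := hr.perm.length_eq; rcases r with _ | ⟨y, _ | ⟨z, r'⟩⟩ <;> simp_all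
  have hnd := hr.nodup_iff.1 hl
  have hxy : l.next x hx = y := by rw [isRotated_next_eq hr hl, next_cons_cons_eq]
  have hyz : l.next y (hr.mem_iff.2 (by simp)) = z := by
    rw [isRotated_next_eq hr hl]
    exact next_eq_of_pair_infix hnd ⟨[x], r, rfl⟩
  simp only [hxy, hyz]
  exact fun hzx => by simp_all

end List

open List

section

variable {V : Type*}

theorem containsEdge_comm {P : List V} {x y : V} : ContainsEdge P x y ↔ ContainsEdge P y x :=
  or_comm

theorem cycAdj_comm {C : List V} {x y : V} : CycAdj C x y ↔ CycAdj C y x :=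
  containsEdge_comm

theorem ContainsEdge.cycAdj {P : List V} {x y : V} (h : ContainsEdge P x y) : CycAdj P x y :=
  h.imp (·.trans (prefix_append _ _).isInfix) (·.trans (prefix_append _ _).isInfix)

theorem not_containsEdge_of_nodup {P : List V} {x y : V} (hP : P.Nodup) (hx : P.head? = some x)
    (hy : P.getLast? = some y) (hlen : 3 ≤ P.length) : ¬ ContainsEdge P x y := by
  have hpair : ∀ a b, [a, b] <:+: P →
      ∃ k, k + 1 < P.length ∧ P[k]? = some a ∧ P[k + 1]? = some b := by
    intro a b h
    obtain ⟨k, hk, h⟩ := infix_iff_getElem?.1 h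
    exact ⟨k, by simp at hk; omega, by simpa using h 0 (by simp),
      by simpa [add_comm] using h 1 (by simp)⟩
  rw [head?_eq_getElem?] at hx
  rw [getLast?_eq_getElem?] at hy
  rintro (h | h) <;> obtain ⟨k, hk, ha, hb⟩ := hpair _ _ h
  · have hk0 := (getElem?_inj (by omega) hP).1 (ha.trans hx.symm)
    have hk1 := (getElem?_inj (by omega) hP).1 (hb.trans hy.symm)
    omega
  · have := (getElem?_inj (by omega) hP).1 (hb.trans hx.symm)
    omega

theorem pathLen_cons_cons (d : V → V → ℝ) (a b : V) (L : List V) :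
    pathLen d (a :: b :: L) = d a b + pathLen d (b :: L) := by
  simp [pathLen]

theorem pathLen_concat (d : V → V → ℝ) (c : V) :
    ∀ {L : List V} (hL : L ≠ []), pathLen d (L ++ [c]) = pathLen d L + d (L.getLast hL) c
  | [a], _ => by simp [pathLen]
  | a :: b :: L, _ => by
    rw [cons_append, cons_append, pathLen_cons_cons, ← cons_append,
      pathLen_concat d c (cons_ne_nil b L), pathLen_cons_cons, getLast_cons (cons_ne_nil b L),
      add_assoc]

theorem pathLen_reverse {d : V → V → ℝ} (hd : ∀ u v, d u v = d v u) :
    ∀ L : List V, pathLen d L.reverse = pathLen d L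
  | [] | [_] => rfl
  | a :: b :: L => by
    rw [reverse_cons, pathLen_concat d a (by simp), pathLen_reverse hd (b :: L),
      pathLen_cons_cons, getLast_reverse, head_cons, hd a b, add_comm]

theorem cycLen_eq_pathLen_add (d : V → V → ℝ) {C : List V} (hC : C ≠ []) :
    cycLen d C = pathLen d C + d (C.getLast hC) (C.head hC) := by
  obtain ⟨a, t, rfl⟩ := exists_cons_of_ne_nil hC
  exact pathLen_concat d a hC

theorem cycLen_concat (d : V → V → ℝ) (a : V) (L : List V) :
    cycLen d (L ++ [a]) = cycLen d (a :: L) := by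
  obtain ⟨b, t, hbt⟩ := exists_cons_of_ne_nil (show L ++ [a] ≠ [] by simp)
  have hlast : (b :: t).getLast (cons_ne_nil b t) = a := by
    simpa [getLast?_eq_some_getLast] using congrArg getLast? hbt.symm
  calc cycLen d (L ++ [a]) = cycLen d (b :: t) := by rw [hbt]
    _ = pathLen d (a :: b :: t) := by
      rw [cycLen_eq_pathLen_add d (cons_ne_nil b t), hlast, pathLen_cons_cons, add_comm]; rfl
    _ = cycLen d (a :: L) := by rw [← hbt]; simp [cycLen]

theorem cycLen_rotate (d : V → V → ℝ) (C : List V) (k : ℕ) :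
    cycLen d (C.rotate k) = cycLen d C := by
  induction k with
  | zero => rw [rotate_zero]
  | succ k ih =>
    rw [← rotate_rotate, ← ih]
    rcases C.rotate k with _ | ⟨a, t⟩
    · rfl
    · rw [rotate_cons_succ, rotate_zero, cycLen_concat]

theorem IsHamCycle.length_eq_card [Fintype V] {C : List V} (hC : IsHamCycle C) :
    C.length = Fintype.card V := by
  classical
  rw [← toFinset_card_of_nodup hC.1, eq_univ_iff_forall.2 fun x => mem_toFinset.2 (hC.2 x),
    card_univ]

theorem IsHamPath.isHamCycle {P : List V} {u v : V} (hP : IsHamPath P u v) : IsHamCycle P :=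
  ⟨hP.1, hP.2.1⟩

theorem IsHamPath.reverse {P : List V} {u v : V} (hP : IsHamPath P u v) :
    IsHamPath P.reverse v u :=
  ⟨nodup_reverse.2 hP.1, by simpa using hP.2.1, by simpa using hP.2.2.2,
    by simpa using hP.2.2.1⟩

theorem IsHamPath.cycLen_eq (d : V → V → ℝ) {P : List V} {u v : V} (hP : IsHamPath P u v) :
    cycLen d P = pathLen d P + d v u := by
  have hne : P ≠ [] := by rintro rfl; simpa using hP.2.2.1
  rw [cycLen_eq_pathLen_add d hne,
    ← Option.some_inj.1 ((getLast?_eq_some_getLast hne).symm.trans hP.2.2.2),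
    ← Option.some_inj.1 ((head?_eq_some_head hne).symm.trans hP.2.2.1)]

end

section

variable {V : Type*} [DecidableEq V]

theorem cycAdj_iff_next {C : List V} (hC : C.Nodup) {x y : V} :
    CycAdj C x y ↔ (∃ hx : x ∈ C, C.next x hx = y) ∨ ∃ hy : y ∈ C, C.next y hy = x := by
  rw [CycAdj, ContainsEdge, pair_infix_append_take_one_iff hC, pair_infix_append_take_one_iff hC]

theorem cycAdj_next {C : List V} (hC : C.Nodup) {x : V} (hx : x ∈ C) :
    CycAdj C x (C.next x hx) :=
  (cycAdj_iff_next hC).2 (.inl ⟨hx, rfl⟩)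

theorem cycAdj_iff_of_isRotated {C C' : List V} (h : C ~r C') (hC : C.Nodup) {x y : V} :
    CycAdj C x y ↔ CycAdj C' x y := by
  have hnext : ∀ a b,
      (∃ ha : a ∈ C, C.next a ha = b) ↔ ∃ ha : a ∈ C', C'.next a ha = b :=
    fun a b => ⟨fun ⟨ha, hab⟩ => ⟨h.mem_iff.1 ha, isRotated_next_eq h hC ha ▸ hab⟩,
      fun ⟨ha, hab⟩ => ⟨h.mem_iff.2 ha, isRotated_next_eq h hC (h.mem_iff.2 ha) ▸ hab⟩⟩
  rw [cycAdj_iff_next hC, cycAdj_iff_next (h.nodup_iff.1 hC), hnext, hnext]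

theorem cycAdj_reverse_iff {C : List V} (hC : C.Nodup) {x y : V} :
    CycAdj C.reverse x y ↔ CycAdj C x y := by
  have hnext : ∀ a b, (∃ ha : a ∈ C.reverse, C.reverse.next a ha = b) ↔
      ∃ hb : b ∈ C, C.next b hb = a := by
    refine fun a b => ⟨fun ⟨ha, hab⟩ => ?_, fun ⟨hb, hba⟩ => ?_⟩
    · rw [mem_reverse] at ha
      rw [← hab, next_reverse_eq_prev C hC a ha]
      exact ⟨prev_mem .., next_prev C hC a ha⟩
    · subst hba
      exact ⟨mem_reverse.2 (next_mem ..), by rw [next_reverse_eq_prev C hC _ (next_mem ..),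
        prev_next C hC b hb]⟩
  rw [cycAdj_iff_next (nodup_reverse.2 hC), cycAdj_iff_next hC, hnext, hnext, or_comm]

theorem exists_rotate_isHamPath_of_next_eq {H : List V} (hH : IsHamCycle H) {u v : V}
    (h : H.next v (hH.2 v) = u) : ∃ k, IsHamPath (H.rotate k) u v := by
  obtain ⟨r, k, hk⟩ := exists_isRotated_cons (hH.2 u)
  have hr : H ~r u :: r := ⟨k, hk⟩
  have hlast : (u :: r).getLast (cons_ne_nil u r) = v := by
    rw [← prev_head_eq_getLast (u :: r) (cons_ne_nil u r)]
    change (u :: r).prev u (mem_cons_self) = v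
    rw [← isRotated_prev_eq hr hH.1 (hH.2 u), ← h, prev_next _ hH.1]
  refine ⟨k, hk ▸ ⟨hr.nodup_iff.1 hH.1, fun z => hr.mem_iff.1 (hH.2 z), rfl, ?_⟩⟩
  rw [getLast?_eq_some_getLast (cons_ne_nil u r), hlast]

theorem exists_isHamPath_of_cycAdj {d : V → V → ℝ} (hd : ∀ u v, d u v = d v u) {H : List V}
    (hH : IsHamCycle H) {u v : V} (h : CycAdj H u v) :
    ∃ Q, IsHamPath Q u v ∧ pathLen d Q + d v u = cycLen d H := by
  rcases (cycAdj_iff_next hH.1).1 h with ⟨_, huv⟩ | ⟨_, hvu⟩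
  · obtain ⟨k, hk⟩ := exists_rotate_isHamPath_of_next_eq hH huv
    refine ⟨_, hk.reverse, ?_⟩
    rw [pathLen_reverse hd, hd, ← hk.cycLen_eq, cycLen_rotate]
  · obtain ⟨k, hk⟩ := exists_rotate_isHamPath_of_next_eq hH hvu
    exact ⟨_, hk, by rw [← hk.cycLen_eq, cycLen_rotate]⟩

theorem cycAdj_of_containsEdge_of_isHamPath {d : V → V → ℝ} (hd : ∀ u v, d u v = d v u)
    {H : List V} (hH : IsHamCycle H)
    (hHmin : ∀ C : List V, IsHamCycle C → cycLen d H ≤ cycLen d C)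
    (hHuniq : ∀ C : List V, IsHamCycle C → cycLen d C = cycLen d H →
      ∃ k : ℕ, C = H.rotate k ∨ C = H.reverse.rotate k)
    {u v : V} (hadj : CycAdj H u v) {P : List V} (hP : IsHamPath P u v)
    (hPmin : ∀ Q : List V, IsHamPath Q u v → pathLen d P ≤ pathLen d Q)
    {x y : V} (hxy : ContainsEdge P x y) : CycAdj H x y := by
  obtain ⟨Q, hQ, hQH⟩ := exists_isHamPath_of_cycAdj hd hH hadj
  have hPH : cycLen d P = cycLen d H := by
    refine le_antisymm ?_ (hHmin P hP.isHamCycle)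
    rw [hP.cycLen_eq, ← hQH]
    linarith [hPmin Q hQ]
  obtain ⟨k, rfl | rfl⟩ := hHuniq P hP.isHamCycle hPH
  · exact (cycAdj_iff_of_isRotated ⟨k, rfl⟩ hH.1).2 hxy.cycAdj
  · exact (cycAdj_reverse_iff hH.1).1
      ((cycAdj_iff_of_isRotated ⟨k, rfl⟩ (nodup_reverse.2 hH.1)).2 hxy.cycAdj)

variable [Fintype V]

def cycleEdgeFinset (C : List V) (hC : ∀ v, v ∈ C) : Finset (Sym2 V) :=
  univ.image fun v => s(v, C.next v (hC v))

theorem card_cycleEdgeFinset {C : List V} (hC : IsHamCycle C) (h3 : 3 ≤ C.length) :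
    (cycleEdgeFinset C hC.2).card = Fintype.card V := by
  refine card_image_of_injective _ fun v w hvw => ?_
  rcases Sym2.eq_iff.1 hvw with ⟨hvw, -⟩ | ⟨hvw, hwv⟩
  · exact hvw
  · subst hvw
    exact absurd hwv (next_next_ne_self hC.1 h3 (hC.2 w))

theorem not_isDiag_of_mem_cycleEdgeFinset {C : List V} (hC : IsHamCycle C) (h2 : 2 ≤ C.length)
    {p : Sym2 V} (hp : p ∈ cycleEdgeFinset C hC.2) : ¬ p.IsDiag := by
  obtain ⟨v, -, rfl⟩ := mem_image.1 hp
  exact Sym2.mk_isDiag_iff.not.2 (next_ne_self hC.1 h2 (hC.2 v)).symm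

theorem cycAdj_of_mk_mem_cycleEdgeFinset {C : List V} (hC : IsHamCycle C) {u v : V}
    (h : s(u, v) ∈ cycleEdgeFinset C hC.2) : CycAdj C u v := by
  obtain ⟨w, -, hw⟩ := mem_image.1 h
  rcases Sym2.eq_iff.1 hw with ⟨rfl, rfl⟩ | ⟨rfl, rfl⟩
  · exact cycAdj_next hC.1 _
  · exact cycAdj_comm.1 (cycAdj_next hC.1 _)

theorem freq_add_card_le (OP : V → V → List V) {x y : V} {T : Finset (Sym2 V)}
    (hT : ∀ p ∈ T, ¬ p.IsDiag)
    (hOP : ∀ u v : V, u ≠ v → s(u, v) ∈ T → ¬ ContainsEdge (OP u v) x y) :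
    freq OP s(x, y) + T.card ≤ (Fintype.card V).choose 2 := by
  classical
  rw [freq, Nat.card_eq_fintype_card, Fintype.card_subtype, ← Sym2.card_subtype_not_diag,
    Fintype.card_subtype, ← card_union_of_disjoint]
  · refine card_le_card (union_subset (fun p hp => ?_) fun p hp => ?_)
    · exact mem_filter.2 ⟨mem_univ p, (mem_filter.1 hp).2.1⟩
    · exact mem_filter.2 ⟨mem_univ p, hT p hp⟩
  · refine disjoint_left.2 fun p hp hpT => ?_
    obtain ⟨-, hdiag, u, v, rfl, x', y', hxy, hP⟩ := mem_filter.1 hp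
    refine hOP u v (Sym2.mk_isDiag_iff.not.1 hdiag) hpT ?_
    rcases Sym2.eq_iff.1 hxy with ⟨rfl, rfl⟩ | ⟨rfl, rfl⟩
    · exact hP
    · exact containsEdge_comm.1 hP

end

theorem stmt9_general {V : Type*} [Fintype V] [DecidableEq V] (i : ℕ) (hi : 4 ≤ i)
    (hcard : Fintype.card V = i)
    (d : V → V → ℝ) (hdsymm : ∀ u v : V, d u v = d v u)
    (OP : V → V → List V)
    (hOP : ∀ u v : V, u ≠ v → IsHamPath (OP u v) u v)
    (hOPmin : ∀ u v : V, u ≠ v → ∀ Q : List V, IsHamPath Q u v →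
      pathLen d (OP u v) ≤ pathLen d Q)
    (H : List V) (hH : IsHamCycle H)
    (hHmin : ∀ C : List V, IsHamCycle C → cycLen d H ≤ cycLen d C)
    (hHuniq : ∀ C : List V, IsHamCycle C → cycLen d C = cycLen d H →
      ∃ k : ℕ, C = H.rotate k ∨ C = H.reverse.rotate k) :
    ∀ x y : V, x ≠ y → ¬ CycAdj H x y →
      (∀ u v : V, u ≠ v → CycAdj H u v → ¬ ContainsEdge (OP u v) x y) ∧
      ¬ ContainsEdge (OP x y) x y ∧
      freq OP s(x, y) ≤ i * (i - 1) / 2 - i - 1 := by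
  intro x y hxy hxyH
  have hH3 : 3 ≤ H.length := by rw [hH.length_eq_card]; omega
  have hOHC : ∀ u v : V, u ≠ v → CycAdj H u v → ¬ ContainsEdge (OP u v) x y :=
    fun u v huv hadj hP => hxyH <| cycAdj_of_containsEdge_of_isHamPath hdsymm hH hHmin hHuniq
      hadj (hOP u v huv) (hOPmin u v huv) hP
  have hends : ∀ u v : V, u ≠ v → ¬ ContainsEdge (OP u v) u v := fun u v huv =>
    have hP := hOP u v huv
    not_containsEdge_of_nodup hP.1 hP.2.2.1 hP.2.2.2
      (by rw [hP.isHamCycle.length_eq_card]; omega)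
  refine ⟨hOHC, hends x y hxy, ?_⟩
  have hcount := freq_add_card_le OP (x := x) (y := y)
    (T := insert s(x, y) (cycleEdgeFinset H hH.2)) ?_ ?_
  · rw [card_insert_of_notMem fun h => hxyH (cycAdj_of_mk_mem_cycleEdgeFinset hH h),
      card_cycleEdgeFinset hH hH3, hcard, Nat.choose_two_right] at hcount
    omega
  · simp only [mem_insert, forall_eq_or_imp, Sym2.mk_isDiag_iff]
    exact ⟨hxy, fun _ => not_isDiag_of_mem_cycleEdgeFinset hH (by omega)⟩
  · intro u v huv huvT
    rcases mem_insert.1 huvT with h | h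
    · rcases Sym2.eq_iff.1 h with ⟨rfl, rfl⟩ | ⟨rfl, rfl⟩
      · exact hends u v huv
      · exact containsEdge_comm.not.1 (hends u v huv)
    · exact hOHC u v huv (cycAdj_of_mk_mem_cycleEdgeFinset hH h)

/-- Every ordinary edge `g = {x, y}` has frequency at most
`i(i-1)/2 - i - 1`: it lies in none of the `i` optimal paths whose endpoints are
cyclically consecutive on the OHC, nor in the optimal path whose endpoints are
the endpoints of `g`. -/
theorem stmt9 {V : Type*} [Fintype V] [DecidableEq V] (i : ℕ) (hi : 4 ≤ i)
    (hcard : Fintype.card V = i)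
    (d : V → V → ℝ) (hdsymm : ∀ u v : V, d u v = d v u)
    (hdpos : ∀ u v : V, u ≠ v → 0 < d u v)
    (OP : V → V → List V)
    (hOP : ∀ u v : V, u ≠ v → IsHamPath (OP u v) u v)
    (hOPmin : ∀ u v : V, u ≠ v → ∀ Q : List V, IsHamPath Q u v →
      pathLen d (OP u v) ≤ pathLen d Q)
    (hOPuniq : ∀ u v : V, u ≠ v → ∀ Q : List V, IsHamPath Q u v →
      pathLen d Q = pathLen d (OP u v) → Q = OP u v)
    (hOPsymm : ∀ u v : V, OP v u = (OP u v).reverse)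
    (H : List V) (hH : IsHamCycle H)
    (hHmin : ∀ C : List V, IsHamCycle C → cycLen d H ≤ cycLen d C)
    (hHuniq : ∀ C : List V, IsHamCycle C → cycLen d C = cycLen d H →
      ∃ k : ℕ, C = H.rotate k ∨ C = H.reverse.rotate k) :
    ∀ x y : V, x ≠ y → ¬ CycAdj H x y →
      (∀ u v : V, u ≠ v → CycAdj H u v → ¬ ContainsEdge (OP u v) x y) ∧
      ¬ ContainsEdge (OP x y) x y ∧
      freq OP s(x, y) ≤ i * (i - 1) / 2 - i - 1 :=
  stmt9_general i hi hcard d hdsymm OP hOP hOPmin H hH hHmin hHuniq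
end

section
/- The number of edges e of K_i whose frequency satisfies f(e) > i(i−1)/4 is at most ⌊3i/2⌋. -/
/-!
On every optimal path a vertex `w` has at most two neighbours, and since `OP v u` is the reverse
of `OP u v` the two orientations of a pair contribute the same neighbours. Summing over the
`C(i,2)` unordered pairs, the frequencies of the edges at `w` add up to at most `i(i-1)`. A heavy
edge has frequency above `i(i-1)/4`, so `w` lies on at most three heavy edges, and the handshake
lemma bounds the number of heavy edges by `3i/2`.
-/

open Finset

theorem List.Nodup.eq_of_pair_infix {V : Type*} {w y z : V} :
    ∀ {P : List V}, P.Nodup → [w, y] <:+: P → [w, z] <:+: P → y = z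
  | [], _, hy, _ => by simp at hy
  | a :: l, hP, hy, hz => by
    rw [List.infix_cons_iff] at hy hz
    rw [List.nodup_cons] at hP
    rcases hy with hy | hy <;> rcases hz with hz | hz
    · simp only [List.cons_prefix_cons] at hy hz
      exact List.singleton_inj.mp
        ((List.prefix_of_prefix_length_le hy.2 hz.2 le_rfl).eq_of_length rfl)
    · simp only [List.cons_prefix_cons] at hy
      exact absurd (hy.1 ▸ hz.sublist.mem (by simp)) hP.1
    · simp only [List.cons_prefix_cons] at hz
      exact absurd (hz.1 ▸ hy.sublist.mem (by simp)) hP.1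
    · exact hP.2.eq_of_pair_infix hy hz

namespace ContainsEdge

variable {V : Type*} {P : List V} {x y : V}

instance [DecidableEq V] : Decidable (ContainsEdge P x y) :=
  inferInstanceAs (Decidable (_ ∨ _))

theorem symm : ContainsEdge P x y → ContainsEdge P y x := Or.symm

theorem reverse_iff : ContainsEdge P.reverse x y ↔ ContainsEdge P x y :=
  (or_congr (List.reverse_infix (l₁ := [y, x])) (List.reverse_infix (l₁ := [x, y]))).trans
    Or.comm

theorem of_sym2_eq {a b : V} (he : s(a, b) = s(x, y)) (h : ContainsEdge P a b) :
    ContainsEdge P x y := by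
  rcases Sym2.eq_iff.mp he with ⟨rfl, rfl⟩ | ⟨rfl, rfl⟩
  exacts [h, h.symm]

theorem card_filter_le_two [Fintype V] [DecidableEq V] (hP : P.Nodup) (w : V) :
    #{y | ContainsEdge P w y} ≤ 2 := by
  have hsucc : #{y | [w, y] <:+: P} ≤ 1 := Finset.card_le_one.mpr fun y hy z hz =>
    hP.eq_of_pair_infix (mem_filter.mp hy).2 (mem_filter.mp hz).2
  have hpred : #{y | [y, w] <:+: P} ≤ 1 := Finset.card_le_one.mpr fun y hy z hz =>
    (List.nodup_reverse.mpr hP).eq_of_pair_infix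
      (List.reverse_infix.mpr (mem_filter.mp hy).2)
      (List.reverse_infix.mpr (mem_filter.mp hz).2)
  calc #{y | ContainsEdge P w y}
      ≤ #(({y | [w, y] <:+: P} : Finset V) ∪ ({y | [y, w] <:+: P} : Finset V)) :=
        card_le_card fun y hy => mem_union.mpr <| (mem_filter.mp hy).2.imp
          (fun h => mem_filter.mpr ⟨mem_univ y, h⟩)
          (fun h => mem_filter.mpr ⟨mem_univ y, h⟩)
    _ ≤ 2 := (card_union_le _ _).trans (by omega)

end ContainsEdge

section Frequency

variable {V : Type*} [Fintype V] {OP : V → V → List V}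

theorem sum_freq_le_two_mul_choose_two (hOP : ∀ u v, u ≠ v → (OP u v).Nodup)
    (hOPsymm : ∀ u v, OP v u = (OP u v).reverse) (w : V) :
    ∑ x, freq OP s(w, x) ≤ 2 * (Fintype.card V).choose 2 := by
  classical
  let R : Sym2 V → V → Prop := fun p x =>
    ∃ u v, p = s(u, v) ∧ ∃ a b, s(w, x) = s(a, b) ∧ ContainsEdge (OP u v) a b
  let pairs : Finset (Sym2 V) := {p | ¬ p.IsDiag}
  have hfreq : ∀ x, freq OP s(w, x) = #(pairs.bipartiteBelow R x) := by
    intro x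
    rw [freq, Nat.card_eq_fintype_card, Fintype.card_subtype, bipartiteBelow, filter_filter]
  have hpair : ∀ p ∈ pairs, #(univ.bipartiteAbove R p) ≤ 2 := by
    intro p hp
    induction p using Sym2.ind with | _ u v => ?_
    have huv : u ≠ v := by simpa [pairs] using hp
    refine (card_le_card fun x hx => ?_).trans (ContainsEdge.card_filter_le_two (hOP u v huv) w)
    obtain ⟨u', v', he, a, b, hx, hc⟩ := (mem_bipartiteAbove R).mp hx |>.2
    refine mem_filter.mpr ⟨mem_univ x, ?_⟩
    rcases Sym2.eq_iff.mp he with ⟨rfl, rfl⟩ | ⟨rfl, rfl⟩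
    · exact hc.of_sym2_eq hx.symm
    · rw [hOPsymm, ContainsEdge.reverse_iff] at hc
      exact hc.of_sym2_eq hx.symm
  calc ∑ x, freq OP s(w, x) = ∑ p ∈ pairs, #(univ.bipartiteAbove R p) := by
        simp_rw [hfreq]; exact (sum_card_bipartiteAbove_eq_sum_card_bipartiteBelow R).symm
    _ ≤ #pairs * 2 := sum_le_card_nsmul _ _ _ hpair
    _ = 2 * (Fintype.card V).choose 2 := by
        rw [← Sym2.card_subtype_not_diag, Fintype.card_subtype, mul_comm]

end Frequency

section HeavyGraph

variable {V : Type*}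

def heavyGraph (OP : V → V → List V) (t : ℚ) : SimpleGraph V :=
  SimpleGraph.fromEdgeSet {e | t < freq OP e}

theorem heavyGraph_adj {OP : V → V → List V} {t : ℚ} {x y : V} :
    (heavyGraph OP t).Adj x y ↔ t < freq OP s(x, y) ∧ x ≠ y :=
  SimpleGraph.fromEdgeSet_adj _

variable [DecidableEq V] {OP : V → V → List V}

noncomputable instance (t : ℚ) : DecidableRel (heavyGraph OP t).Adj :=
  inferInstanceAs (DecidableRel (SimpleGraph.fromEdgeSet _).Adj)

variable [Fintype V]

theorem card_edgeFinset_heavyGraph (t : ℚ) :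
    #(heavyGraph OP t).edgeFinset = Nat.card {e : Sym2 V // ¬ e.IsDiag ∧ t < freq OP e} := by
  rw [SimpleGraph.edgeFinset, Set.toFinset_card, ← Nat.card_eq_fintype_card]
  exact Nat.card_congr <| Equiv.subtypeEquivRight fun e => by
    simp [heavyGraph, SimpleGraph.edgeSet_fromEdgeSet, and_comm]

theorem degree_heavyGraph_le_three (hOP : ∀ u v, u ≠ v → (OP u v).Nodup)
    (hOPsymm : ∀ u v, OP v u = (OP u v).reverse) (w : V) :
    (heavyGraph OP ((Fintype.card V : ℚ) * (Fintype.card V - 1) / 4)).degree w ≤ 3 := by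
  by_contra! hN
  rw [← SimpleGraph.card_neighborFinset_eq_degree] at hN
  set n : ℚ := (Fintype.card V : ℚ)
  set N := (heavyGraph OP (n * (n - 1) / 4)).neighborFinset w
  have hheavy : #N • (n * (n - 1) / 4) < ∑ x ∈ N, (freq OP s(w, x) : ℚ) := by
    rw [← sum_const]
    refine sum_lt_sum_of_nonempty (card_pos.mp (by omega)) fun x hx => ?_
    exact (heavyGraph_adj.mp ((SimpleGraph.mem_neighborFinset _ _ _).mp hx)).1
  have hpairs : n * (n - 1) = ((2 * (Fintype.card V).choose 2 : ℕ) : ℚ) := by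
    push_cast [Nat.cast_choose_two]; ring
  have htotal : ∑ x ∈ N, (freq OP s(w, x) : ℚ) ≤ n * (n - 1) := by
    rw [hpairs]
    exact_mod_cast (sum_le_sum_of_subset (subset_univ N)).trans
      (sum_freq_le_two_mul_choose_two hOP hOPsymm w)
  have hnonneg : 0 ≤ n * (n - 1) := hpairs ▸ Nat.cast_nonneg _
  have h4 : (4 : ℚ) ≤ #N := by exact_mod_cast hN
  rw [nsmul_eq_mul] at hheavy
  nlinarith

end HeavyGraph

theorem stmt11_general {V : Type*} [Fintype V] (i : ℕ)
    (hcard : Fintype.card V = i)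
    (OP : V → V → List V)
    (hOP : ∀ u v : V, u ≠ v → IsHamPath (OP u v) u v)
    (hOPsymm : ∀ u v : V, OP v u = (OP u v).reverse) :
    Nat.card {e : Sym2 V // ¬ e.IsDiag ∧
      (i : ℚ) * ((i : ℚ) - 1) / 4 < (freq OP e : ℚ)} ≤ 3 * i / 2 := by
  classical
  subst hcard
  rw [← card_edgeFinset_heavyGraph, Nat.le_div_iff_mul_le two_pos, mul_comm,
    ← SimpleGraph.sum_degrees_eq_twice_card_edges]
  calc ∑ w, (heavyGraph OP _).degree w ≤ ∑ _w : V, 3 :=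
        sum_le_sum fun w _ => degree_heavyGraph_le_three (fun u v h => (hOP u v h).1) hOPsymm w
    _ = 3 * Fintype.card V := by rw [sum_const, card_univ, smul_eq_mul, mul_comm]

/-- At most `⌊3i/2⌋` edges of `K_i` have frequency strictly
greater than `i(i-1)/4`. -/
theorem stmt11 {V : Type*} [Fintype V] [DecidableEq V] (i : ℕ) (hi : 4 ≤ i)
    (hcard : Fintype.card V = i)
    (d : V → V → ℝ) (hdsymm : ∀ u v : V, d u v = d v u)
    (hdpos : ∀ u v : V, u ≠ v → 0 < d u v)
    (OP : V → V → List V)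
    (hOP : ∀ u v : V, u ≠ v → IsHamPath (OP u v) u v)
    (hOPmin : ∀ u v : V, u ≠ v → ∀ Q : List V, IsHamPath Q u v →
      pathLen d (OP u v) ≤ pathLen d Q)
    (hOPuniq : ∀ u v : V, u ≠ v → ∀ Q : List V, IsHamPath Q u v →
      pathLen d Q = pathLen d (OP u v) → Q = OP u v)
    (hOPsymm : ∀ u v : V, OP v u = (OP u v).reverse) :
    Nat.card {e : Sym2 V // ¬ e.IsDiag ∧
      (i : ℚ) * ((i : ℚ) - 1) / 4 < (freq OP e : ℚ)} ≤ 3 * i / 2 :=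
  stmt11_general i hcard OP hOP hOPsymm
end

section
/- Assume the three perfect-matching sums of K_4 are strictly ordered: w(a,b)+w(c,d) < w(a,d)+w(b,c) < w(a,c)+w(b,d). Then for each of the six unordered pairs {u,v} of distinct vertices the two Hamiltonian paths from u to v have different lengths, so each pair has a unique optimal 4-vertex path, and the frequencies of the edges are: f({a,b}) = f({c,d}) = 5, f({a,d}) = f({b,c}) = 3, and f({a,c}) = f({b,d}) = 1. In particular vertex-disjoint edges have equal frequency, and the three edges incident to any one vertex have frequencies 1, 3, and 5. -/
open Finset

lemma pathLen4 {V : Type*} (w : V → V → ℝ) (x y z t : V) :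
    pathLen w [x, y, z, t] = w x y + w y z + w z t := by
  simp [pathLen]; ring

lemma infix_pair {α : Type*} (x y p q r s : α) :
    [x, y] <:+: [p, q, r, s] ↔ (x = p ∧ y = q) ∨ (x = q ∧ y = r) ∨ (x = r ∧ y = s) := by
  simp [List.infix_cons_iff, List.cons_prefix_cons]

lemma CE_comm {V : Type*} (P : List V) (x y : V) :
    ContainsEdge P x y ↔ ContainsEdge P y x := or_comm

lemma ham_classify {V : Type*} [Fintype V] [DecidableEq V] (hcard : Fintype.card V = 4)
    {u v p q : V} (hcov : ∀ x : V, x = u ∨ x = v ∨ x = p ∨ x = q)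
    (hup : u ≠ p) (huq : u ≠ q) (hvp : v ≠ p) (hvq : v ≠ q) (hpq : p ≠ q)
    {P : List V} (hP : IsHamPath P u v) :
    P = [u, p, q, v] ∨ P = [u, q, p, v] := by
  obtain ⟨hnd, hmem, hhead, hlast⟩ := hP
  have hfin : P.toFinset = Finset.univ :=
    Finset.eq_univ_iff_forall.2 fun x => List.mem_toFinset.2 (hmem x)
  have hlen : P.length = 4 := by
    have h := List.toFinset_card_of_nodup hnd
    rw [hfin, Finset.card_univ, hcard] at h
    omega
  rcases P with _ | ⟨x0, _ | ⟨x1, _ | ⟨x2, _ | ⟨x3, _ | ⟨x4, rest⟩⟩⟩⟩⟩ <;>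
    simp only [List.length] at hlen <;> try omega
  obtain rfl : x0 = u := by simpa using hhead
  obtain rfl : x3 = v := by simpa [List.getLast?] using hlast
  have hmp := hmem p
  have hmq := hmem q
  simp only [List.mem_cons, List.not_mem_nil, or_false] at hmp hmq
  have h1 : x1 ≠ x2 := by simp [List.nodup_cons] at hnd; tauto
  rcases hmp with rfl | hp1 | hp2 | rfl
  · exact absurd rfl hup
  all_goals rcases hmq with rfl | hq1 | hq2 | rfl
  all_goals first
    | (exact absurd rfl huq) | (exact absurd rfl hup)
    | (exact absurd rfl hvp) | (exact absurd rfl hvq)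
    | (subst_vars; first | exact absurd rfl hpq | exact absurd rfl h1 | simp)

lemma mkHam {V : Type*} {u p q v : V} (hcov : ∀ x : V, x = u ∨ x = p ∨ x = q ∨ x = v)
    (h1 : u ≠ p) (h2 : u ≠ q) (h3 : u ≠ v) (h4 : p ≠ q) (h5 : p ≠ v) (h6 : q ≠ v) :
    IsHamPath [u, p, q, v] u v :=
  ⟨by simp [h1, h2, h3, h4, h5, h6],
   fun x => by rcases hcov x with rfl | rfl | rfl | rfl <;> simp, rfl, rfl⟩

lemma OP_eq {V : Type*} [Fintype V] [DecidableEq V] (hcard : Fintype.card V = 4)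
    (w : V → V → ℝ) {u p q v : V}
    (hcov : ∀ x : V, x = u ∨ x = p ∨ x = q ∨ x = v)
    (h1 : u ≠ p) (h2 : u ≠ q) (h3 : u ≠ v) (h4 : p ≠ q) (h5 : p ≠ v) (h6 : q ≠ v)
    (OP : V → V → List V)
    (hOPham : IsHamPath (OP u v) u v)
    (hOPmin : ∀ Q : List V, IsHamPath Q u v → pathLen w (OP u v) ≤ pathLen w Q)
    (hlt : w u p + w p q + w q v < w u q + w q p + w p v) :
    OP u v = [u, p, q, v] := by
  have hcov' : ∀ x : V, x = u ∨ x = v ∨ x = p ∨ x = q :=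
    fun x => by rcases hcov x with rfl | rfl | rfl | rfl <;> tauto
  rcases ham_classify hcard hcov' h1 h2 h5.symm h6.symm h4 hOPham with h | h
  · exact h
  · exfalso
    have hm := hOPmin [u, p, q, v] (mkHam hcov h1 h2 h3 h4 h5 h6)
    rw [h, pathLen4, pathLen4] at hm
    linarith

lemma part1_helper {V : Type*} [Fintype V] [DecidableEq V] (hcard : Fintype.card V = 4)
    (w : V → V → ℝ) {u v p q : V}
    (hcov : ∀ x : V, x = u ∨ x = v ∨ x = p ∨ x = q)
    (hup : u ≠ p) (huq : u ≠ q) (hvp : v ≠ p) (hvq : v ≠ q) (hpq : p ≠ q)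
    (hne : w u p + w p q + w q v ≠ w u q + w q p + w p v) :
    ∀ P Q : List V, IsHamPath P u v → IsHamPath Q u v → P ≠ Q →
      pathLen w P ≠ pathLen w Q := by
  intro P Q hP hQ hPQ
  rcases ham_classify hcard hcov hup huq hvp hvq hpq hP with rfl | rfl <;>
    rcases ham_classify hcard hcov hup huq hvp hvq hpq hQ with rfl | rfl
  · exact absurd rfl hPQ
  · rw [pathLen4, pathLen4]; exact hne
  · rw [pathLen4, pathLen4]; exact hne.symm
  · exact absurd rfl hPQ

lemma freq_eq {V : Type*} [Fintype V] [DecidableEq V] (OP : V → V → List V) (x y : V)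
    (S : Finset (Sym2 V))
    (h : ∀ p : Sym2 V, (¬ p.IsDiag ∧ ∃ u v : V, p = s(u, v) ∧
        ∃ x' y' : V, s(x, y) = s(x', y') ∧ ContainsEdge (OP u v) x' y') ↔ p ∈ S) :
    freq OP s(x, y) = S.card := by
  unfold freq
  rw [Nat.card_congr (Equiv.subtypeEquivRight h)]
  simp [Nat.card_eq_fintype_card]

set_option maxHeartbeats 4000000 in
/-- Under the strict ordering of the three matching sums of
`K₄`, the two Hamiltonian paths between any pair of endpoints have different
lengths (so each pair has a unique optimal path), and the edge frequencies are
`f({a,b}) = f({c,d}) = 5`, `f({a,d}) = f({b,c}) = 3`, `f({a,c}) = f({b,d}) = 1`. -/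
theorem stmt16 {V : Type*} [Fintype V] [DecidableEq V] (hcard : Fintype.card V = 4)
    (a b c e : V) (hab : a ≠ b) (hac : a ≠ c) (hae : a ≠ e)
    (hbc : b ≠ c) (hbe : b ≠ e) (hce : c ≠ e)
    (w : V → V → ℝ) (hwsymm : ∀ u v : V, w u v = w v u)
    (hwpos : ∀ u v : V, u ≠ v → 0 < w u v)
    (hord₁ : w a b + w c e < w a e + w b c)
    (hord₂ : w a e + w b c < w a c + w b e)
    (OP : V → V → List V)
    (hOP : ∀ u v : V, u ≠ v → IsHamPath (OP u v) u v)
    (hOPmin : ∀ u v : V, u ≠ v → ∀ Q : List V, IsHamPath Q u v →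
      pathLen w (OP u v) ≤ pathLen w Q)
    (hOPsymm : ∀ u v : V, OP v u = (OP u v).reverse) :
    (∀ u v : V, u ≠ v → ∀ P Q : List V, IsHamPath P u v → IsHamPath Q u v →
      P ≠ Q → pathLen w P ≠ pathLen w Q) ∧
    (∀ u v : V, u ≠ v → ∀ Q : List V, IsHamPath Q u v →
      pathLen w Q = pathLen w (OP u v) → Q = OP u v) ∧
    freq OP s(a, b) = 5 ∧ freq OP s(c, e) = 5 ∧
    freq OP s(a, e) = 3 ∧ freq OP s(b, c) = 3 ∧
    freq OP s(a, c) = 1 ∧ freq OP s(b, e) = 1 := by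
  -- symmetric weight facts
  have sba : w b a = w a b := hwsymm b a
  have sca : w c a = w a c := hwsymm c a
  have sea : w e a = w a e := hwsymm e a
  have scb : w c b = w b c := hwsymm c b
  have seb : w e b = w b e := hwsymm e b
  have sec : w e c = w c e := hwsymm e c
  -- every vertex is one of a, b, c, e
  have cover : ∀ x : V, x = a ∨ x = b ∨ x = c ∨ x = e := by
    have h4 : ({a, b, c, e} : Finset V).card = 4 := by
      rw [Finset.card_insert_of_notMem (by simp [hab, hac, hae]),
        Finset.card_insert_of_notMem (by simp [hbc, hbe]),
        Finset.card_insert_of_notMem (by simp [hce]), Finset.card_singleton]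
    have huniv : ({a, b, c, e} : Finset V) = Finset.univ :=
      Finset.eq_univ_of_card _ (by rw [h4, hcard])
    intro x
    have hx : x ∈ ({a, b, c, e} : Finset V) := huniv ▸ Finset.mem_univ x
    simpa using hx
  -- the six optimal paths
  have hOPab : OP a b = [a, e, c, b] :=
    OP_eq hcard w (fun x => by rcases cover x with rfl | rfl | rfl | rfl <;> tauto)
      hae hac hab hce.symm hbe.symm hbc.symm OP (hOP a b hab) (hOPmin a b hab)
      (by linarith)
  have hOPac : OP a c = [a, b, e, c] :=
    OP_eq hcard w (fun x => by rcases cover x with rfl | rfl | rfl | rfl <;> tauto)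
      hab hae hac hbe hbc hce.symm OP (hOP a c hac) (hOPmin a c hac)
      (by linarith)
  have hOPae : OP a e = [a, b, c, e] :=
    OP_eq hcard w (fun x => by rcases cover x with rfl | rfl | rfl | rfl <;> tauto)
      hab hac hae hbc hbe hce OP (hOP a e hae) (hOPmin a e hae)
      (by linarith)
  have hOPbc : OP b c = [b, a, e, c] :=
    OP_eq hcard w (fun x => by rcases cover x with rfl | rfl | rfl | rfl <;> tauto)
      hab.symm hbe hbc hae hac hce.symm OP (hOP b c hbc) (hOPmin b c hbc)
      (by linarith)
  have hOPbe : OP b e = [b, a, c, e] :=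
    OP_eq hcard w (fun x => by rcases cover x with rfl | rfl | rfl | rfl <;> tauto)
      hab.symm hbc hbe hac hae hce OP (hOP b e hbe) (hOPmin b e hbe)
      (by linarith)
  have hOPce : OP c e = [c, b, a, e] :=
    OP_eq hcard w (fun x => by rcases cover x with rfl | rfl | rfl | rfl <;> tauto)
      hbc.symm hac.symm hce hab.symm hbe hae OP (hOP c e hce) (hOPmin c e hce)
      (by linarith)
  have hOPba : OP b a = [b, c, e, a] := by rw [hOPsymm a b, hOPab]; rfl
  have hOPca : OP c a = [c, e, b, a] := by rw [hOPsymm a c, hOPac]; rfl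
  have hOPea : OP e a = [e, c, b, a] := by rw [hOPsymm a e, hOPae]; rfl
  have hOPcb : OP c b = [c, e, a, b] := by rw [hOPsymm b c, hOPbc]; rfl
  have hOPeb : OP e b = [e, c, a, b] := by rw [hOPsymm b e, hOPbe]; rfl
  have hOPec : OP e c = [e, a, b, c] := by rw [hOPsymm c e, hOPce]; rfl
  have part1 : ∀ u v : V, u ≠ v → ∀ P Q : List V, IsHamPath P u v → IsHamPath Q u v →
      P ≠ Q → pathLen w P ≠ pathLen w Q := by
    intro u v huv
    rcases cover u with rfl | rfl | rfl | rfl <;> rcases cover v with rfl | rfl | rfl | rfl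
    · exact absurd rfl huv
    · exact part1_helper hcard w (fun x => by rcases cover x with rfl | rfl | rfl | rfl <;> tauto)
        hac hae hbc hbe hce (by intro h; linarith)
    · exact part1_helper hcard w (fun x => by rcases cover x with rfl | rfl | rfl | rfl <;> tauto)
        hab hae hbc.symm hce hbe (by intro h; linarith)
    · exact part1_helper hcard w (fun x => by rcases cover x with rfl | rfl | rfl | rfl <;> tauto)
        hab hac hbe.symm hce.symm hbc (by intro h; linarith)
    · exact part1_helper hcard w (fun x => by rcases cover x with rfl | rfl | rfl | rfl <;> tauto)
        hbc hbe hac hae hce (by intro h; linarith)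
    · exact absurd rfl huv
    · exact part1_helper hcard w (fun x => by rcases cover x with rfl | rfl | rfl | rfl <;> tauto)
        hab.symm hbe hac.symm hce hae (by intro h; linarith)
    · exact part1_helper hcard w (fun x => by rcases cover x with rfl | rfl | rfl | rfl <;> tauto)
        hab.symm hbc hae.symm hce.symm hac (by intro h; linarith)
    · exact part1_helper hcard w (fun x => by rcases cover x with rfl | rfl | rfl | rfl <;> tauto)
        hbc.symm hce hab hae hbe (by intro h; linarith)
    · exact part1_helper hcard w (fun x => by rcases cover x with rfl | rfl | rfl | rfl <;> tauto)
        hac.symm hce hab.symm hbe hae (by intro h; linarith)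
    · exact absurd rfl huv
    · exact part1_helper hcard w (fun x => by rcases cover x with rfl | rfl | rfl | rfl <;> tauto)
        hac.symm hbc.symm hae.symm hbe.symm hab (by intro h; linarith)
    · exact part1_helper hcard w (fun x => by rcases cover x with rfl | rfl | rfl | rfl <;> tauto)
        hbe.symm hce.symm hab hac hbc (by intro h; linarith)
    · exact part1_helper hcard w (fun x => by rcases cover x with rfl | rfl | rfl | rfl <;> tauto)
        hae.symm hce.symm hab.symm hbc hac (by intro h; linarith)
    · exact part1_helper hcard w (fun x => by rcases cover x with rfl | rfl | rfl | rfl <;> tauto)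
        hae.symm hbe.symm hac.symm hbc.symm hab (by intro h; linarith)
    · exact absurd rfl huv
  have part2 : ∀ u v : V, u ≠ v → ∀ Q : List V, IsHamPath Q u v →
      pathLen w Q = pathLen w (OP u v) → Q = OP u v := by
    intro u v huv Q hQ hlen
    by_contra hne
    exact part1 u v huv Q (OP u v) hQ (hOP u v huv) hne hlen
  have chAB : ∀ u v : V, u ≠ v → (ContainsEdge (OP u v) a b ↔
      (s(u, v) = s(a, c) ∨ s(u, v) = s(a, e) ∨ s(u, v) = s(b, c) ∨ s(u, v) = s(b, e) ∨
        s(u, v) = s(c, e))) := by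
    intro u v huv
    rcases cover u with rfl | rfl | rfl | rfl <;> rcases cover v with rfl | rfl | rfl | rfl <;>
      first
      | exact absurd rfl huv
      | (simp only [hOPab, hOPac, hOPae, hOPbc, hOPbe, hOPce, hOPba, hOPca, hOPea,
           hOPcb, hOPeb, hOPec]
         simp [ContainsEdge, infix_pair, Sym2.eq_iff, hab, hac, hae, hbc, hbe, hce,
           hab.symm, hac.symm, hae.symm, hbc.symm, hbe.symm, hce.symm])
  have chCE : ∀ u v : V, u ≠ v → (ContainsEdge (OP u v) c e ↔
      (s(u, v) = s(a, b) ∨ s(u, v) = s(a, c) ∨ s(u, v) = s(a, e) ∨ s(u, v) = s(b, c) ∨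
        s(u, v) = s(b, e))) := by
    intro u v huv
    rcases cover u with rfl | rfl | rfl | rfl <;> rcases cover v with rfl | rfl | rfl | rfl <;>
      first
      | exact absurd rfl huv
      | (simp only [hOPab, hOPac, hOPae, hOPbc, hOPbe, hOPce, hOPba, hOPca, hOPea,
           hOPcb, hOPeb, hOPec]
         simp [ContainsEdge, infix_pair, Sym2.eq_iff, hab, hac, hae, hbc, hbe, hce,
           hab.symm, hac.symm, hae.symm, hbc.symm, hbe.symm, hce.symm])
  have chAE : ∀ u v : V, u ≠ v → (ContainsEdge (OP u v) a e ↔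
      (s(u, v) = s(a, b) ∨ s(u, v) = s(b, c) ∨ s(u, v) = s(c, e))) := by
    intro u v huv
    rcases cover u with rfl | rfl | rfl | rfl <;> rcases cover v with rfl | rfl | rfl | rfl <;>
      first
      | exact absurd rfl huv
      | (simp only [hOPab, hOPac, hOPae, hOPbc, hOPbe, hOPce, hOPba, hOPca, hOPea,
           hOPcb, hOPeb, hOPec]
         simp [ContainsEdge, infix_pair, Sym2.eq_iff, hab, hac, hae, hbc, hbe, hce,
           hab.symm, hac.symm, hae.symm, hbc.symm, hbe.symm, hce.symm])
  have chBC : ∀ u v : V, u ≠ v → (ContainsEdge (OP u v) b c ↔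
      (s(u, v) = s(a, b) ∨ s(u, v) = s(a, e) ∨ s(u, v) = s(c, e))) := by
    intro u v huv
    rcases cover u with rfl | rfl | rfl | rfl <;> rcases cover v with rfl | rfl | rfl | rfl <;>
      first
      | exact absurd rfl huv
      | (simp only [hOPab, hOPac, hOPae, hOPbc, hOPbe, hOPce, hOPba, hOPca, hOPea,
           hOPcb, hOPeb, hOPec]
         simp [ContainsEdge, infix_pair, Sym2.eq_iff, hab, hac, hae, hbc, hbe, hce,
           hab.symm, hac.symm, hae.symm, hbc.symm, hbe.symm, hce.symm])
  have chAC : ∀ u v : V, u ≠ v → (ContainsEdge (OP u v) a c ↔ s(u, v) = s(b, e)) := by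
    intro u v huv
    rcases cover u with rfl | rfl | rfl | rfl <;> rcases cover v with rfl | rfl | rfl | rfl <;>
      first
      | exact absurd rfl huv
      | (simp only [hOPab, hOPac, hOPae, hOPbc, hOPbe, hOPce, hOPba, hOPca, hOPea,
           hOPcb, hOPeb, hOPec]
         simp [ContainsEdge, infix_pair, Sym2.eq_iff, hab, hac, hae, hbc, hbe, hce,
           hab.symm, hac.symm, hae.symm, hbc.symm, hbe.symm, hce.symm])
  have chBE : ∀ u v : V, u ≠ v → (ContainsEdge (OP u v) b e ↔ s(u, v) = s(a, c)) := by
    intro u v huv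
    rcases cover u with rfl | rfl | rfl | rfl <;> rcases cover v with rfl | rfl | rfl | rfl <;>
      first
      | exact absurd rfl huv
      | (simp only [hOPab, hOPac, hOPae, hOPbc, hOPbe, hOPce, hOPba, hOPca, hOPea,
           hOPcb, hOPeb, hOPec]
         simp [ContainsEdge, infix_pair, Sym2.eq_iff, hab, hac, hae, hbc, hbe, hce,
           hab.symm, hac.symm, hae.symm, hbc.symm, hbe.symm, hce.symm])
  have freqAB : freq OP s(a, b) = 5 := by
    have hiff : ∀ p : Sym2 V, (¬ p.IsDiag ∧ ∃ u v : V, p = s(u, v) ∧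
        ∃ x' y' : V, s(a, b) = s(x', y') ∧ ContainsEdge (OP u v) x' y') ↔
        p ∈ ({s(a, c), s(a, e), s(b, c), s(b, e), s(c, e)} : Finset (Sym2 V)) := by
      intro p
      constructor
      · rintro ⟨hd, u, v, rfl, x', y', hxy, hCE⟩
        have huv : u ≠ v := by simpa [Sym2.mk_isDiag_iff] using hd
        have hCE' : ContainsEdge (OP u v) a b := by
          rcases Sym2.eq_iff.1 hxy with ⟨rfl, rfl⟩ | ⟨rfl, rfl⟩
          · exact hCE
          · exact (CE_comm _ _ _).2 hCE
        have hmem := (chAB u v huv).1 hCE'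
        simpa [Finset.mem_insert] using hmem
      · intro hp
        simp only [Finset.mem_insert, Finset.mem_singleton] at hp
        rcases hp with rfl | rfl | rfl | rfl | rfl
        · exact ⟨by simp [Sym2.mk_isDiag_iff, hac], a, c, rfl, a, b, rfl,
            (chAB a c hac).2 (by simp)⟩
        · exact ⟨by simp [Sym2.mk_isDiag_iff, hae], a, e, rfl, a, b, rfl,
            (chAB a e hae).2 (by simp)⟩
        · exact ⟨by simp [Sym2.mk_isDiag_iff, hbc], b, c, rfl, a, b, rfl,
            (chAB b c hbc).2 (by simp)⟩
        · exact ⟨by simp [Sym2.mk_isDiag_iff, hbe], b, e, rfl, a, b, rfl,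
            (chAB b e hbe).2 (by simp)⟩
        · exact ⟨by simp [Sym2.mk_isDiag_iff, hce], c, e, rfl, a, b, rfl,
            (chAB c e hce).2 (by simp)⟩
    rw [freq_eq OP a b _ hiff]
    rw [Finset.card_insert_of_notMem (by simp [Sym2.eq_iff, hab, hac, hae, hbc, hbe, hce, hab.symm, hac.symm, hae.symm, hbc.symm, hbe.symm, hce.symm]),
      Finset.card_insert_of_notMem (by simp [Sym2.eq_iff, hab, hac, hae, hbc, hbe, hce, hab.symm, hac.symm, hae.symm, hbc.symm, hbe.symm, hce.symm]),
      Finset.card_insert_of_notMem (by simp [Sym2.eq_iff, hab, hac, hae, hbc, hbe, hce, hab.symm, hac.symm, hae.symm, hbc.symm, hbe.symm, hce.symm]),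
      Finset.card_insert_of_notMem (by simp [Sym2.eq_iff, hab, hac, hae, hbc, hbe, hce, hab.symm, hac.symm, hae.symm, hbc.symm, hbe.symm, hce.symm]),
      Finset.card_singleton]
  have freqCE : freq OP s(c, e) = 5 := by
    have hiff : ∀ p : Sym2 V, (¬ p.IsDiag ∧ ∃ u v : V, p = s(u, v) ∧
        ∃ x' y' : V, s(c, e) = s(x', y') ∧ ContainsEdge (OP u v) x' y') ↔
        p ∈ ({s(a, b), s(a, c), s(a, e), s(b, c), s(b, e)} : Finset (Sym2 V)) := by
      intro p
      constructor
      · rintro ⟨hd, u, v, rfl, x', y', hxy, hCE⟩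
        have huv : u ≠ v := by simpa [Sym2.mk_isDiag_iff] using hd
        have hCE' : ContainsEdge (OP u v) c e := by
          rcases Sym2.eq_iff.1 hxy with ⟨rfl, rfl⟩ | ⟨rfl, rfl⟩
          · exact hCE
          · exact (CE_comm _ _ _).2 hCE
        have hmem := (chCE u v huv).1 hCE'
        simpa [Finset.mem_insert] using hmem
      · intro hp
        simp only [Finset.mem_insert, Finset.mem_singleton] at hp
        rcases hp with rfl | rfl | rfl | rfl | rfl
        · exact ⟨by simp [Sym2.mk_isDiag_iff, hab], a, b, rfl, c, e, rfl,
            (chCE a b hab).2 (by simp)⟩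
        · exact ⟨by simp [Sym2.mk_isDiag_iff, hac], a, c, rfl, c, e, rfl,
            (chCE a c hac).2 (by simp)⟩
        · exact ⟨by simp [Sym2.mk_isDiag_iff, hae], a, e, rfl, c, e, rfl,
            (chCE a e hae).2 (by simp)⟩
        · exact ⟨by simp [Sym2.mk_isDiag_iff, hbc], b, c, rfl, c, e, rfl,
            (chCE b c hbc).2 (by simp)⟩
        · exact ⟨by simp [Sym2.mk_isDiag_iff, hbe], b, e, rfl, c, e, rfl,
            (chCE b e hbe).2 (by simp)⟩
    rw [freq_eq OP c e _ hiff]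
    rw [Finset.card_insert_of_notMem (by simp [Sym2.eq_iff, hab, hac, hae, hbc, hbe, hce, hab.symm, hac.symm, hae.symm, hbc.symm, hbe.symm, hce.symm]),
      Finset.card_insert_of_notMem (by simp [Sym2.eq_iff, hab, hac, hae, hbc, hbe, hce, hab.symm, hac.symm, hae.symm, hbc.symm, hbe.symm, hce.symm]),
      Finset.card_insert_of_notMem (by simp [Sym2.eq_iff, hab, hac, hae, hbc, hbe, hce, hab.symm, hac.symm, hae.symm, hbc.symm, hbe.symm, hce.symm]),
      Finset.card_insert_of_notMem (by simp [Sym2.eq_iff, hab, hac, hae, hbc, hbe, hce, hab.symm, hac.symm, hae.symm, hbc.symm, hbe.symm, hce.symm]),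
      Finset.card_singleton]
  have freqAE : freq OP s(a, e) = 3 := by
    have hiff : ∀ p : Sym2 V, (¬ p.IsDiag ∧ ∃ u v : V, p = s(u, v) ∧
        ∃ x' y' : V, s(a, e) = s(x', y') ∧ ContainsEdge (OP u v) x' y') ↔
        p ∈ ({s(a, b), s(b, c), s(c, e)} : Finset (Sym2 V)) := by
      intro p
      constructor
      · rintro ⟨hd, u, v, rfl, x', y', hxy, hCE⟩
        have huv : u ≠ v := by simpa [Sym2.mk_isDiag_iff] using hd
        have hCE' : ContainsEdge (OP u v) a e := by
          rcases Sym2.eq_iff.1 hxy with ⟨rfl, rfl⟩ | ⟨rfl, rfl⟩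
          · exact hCE
          · exact (CE_comm _ _ _).2 hCE
        have hmem := (chAE u v huv).1 hCE'
        simpa [Finset.mem_insert] using hmem
      · intro hp
        simp only [Finset.mem_insert, Finset.mem_singleton] at hp
        rcases hp with rfl | rfl | rfl
        · exact ⟨by simp [Sym2.mk_isDiag_iff, hab], a, b, rfl, a, e, rfl,
            (chAE a b hab).2 (by simp)⟩
        · exact ⟨by simp [Sym2.mk_isDiag_iff, hbc], b, c, rfl, a, e, rfl,
            (chAE b c hbc).2 (by simp)⟩
        · exact ⟨by simp [Sym2.mk_isDiag_iff, hce], c, e, rfl, a, e, rfl,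
            (chAE c e hce).2 (by simp)⟩
    rw [freq_eq OP a e _ hiff]
    rw [Finset.card_insert_of_notMem (by simp [Sym2.eq_iff, hab, hac, hae, hbc, hbe, hce, hab.symm, hac.symm, hae.symm, hbc.symm, hbe.symm, hce.symm]),
      Finset.card_insert_of_notMem (by simp [Sym2.eq_iff, hab, hac, hae, hbc, hbe, hce, hab.symm, hac.symm, hae.symm, hbc.symm, hbe.symm, hce.symm]),
      Finset.card_singleton]
  have freqBC : freq OP s(b, c) = 3 := by
    have hiff : ∀ p : Sym2 V, (¬ p.IsDiag ∧ ∃ u v : V, p = s(u, v) ∧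
        ∃ x' y' : V, s(b, c) = s(x', y') ∧ ContainsEdge (OP u v) x' y') ↔
        p ∈ ({s(a, b), s(a, e), s(c, e)} : Finset (Sym2 V)) := by
      intro p
      constructor
      · rintro ⟨hd, u, v, rfl, x', y', hxy, hCE⟩
        have huv : u ≠ v := by simpa [Sym2.mk_isDiag_iff] using hd
        have hCE' : ContainsEdge (OP u v) b c := by
          rcases Sym2.eq_iff.1 hxy with ⟨rfl, rfl⟩ | ⟨rfl, rfl⟩
          · exact hCE
          · exact (CE_comm _ _ _).2 hCE
        have hmem := (chBC u v huv).1 hCE'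
        simpa [Finset.mem_insert] using hmem
      · intro hp
        simp only [Finset.mem_insert, Finset.mem_singleton] at hp
        rcases hp with rfl | rfl | rfl
        · exact ⟨by simp [Sym2.mk_isDiag_iff, hab], a, b, rfl, b, c, rfl,
            (chBC a b hab).2 (by simp)⟩
        · exact ⟨by simp [Sym2.mk_isDiag_iff, hae], a, e, rfl, b, c, rfl,
            (chBC a e hae).2 (by simp)⟩
        · exact ⟨by simp [Sym2.mk_isDiag_iff, hce], c, e, rfl, b, c, rfl,
            (chBC c e hce).2 (by simp)⟩
    rw [freq_eq OP b c _ hiff]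
    rw [Finset.card_insert_of_notMem (by simp [Sym2.eq_iff, hab, hac, hae, hbc, hbe, hce, hab.symm, hac.symm, hae.symm, hbc.symm, hbe.symm, hce.symm]),
      Finset.card_insert_of_notMem (by simp [Sym2.eq_iff, hab, hac, hae, hbc, hbe, hce, hab.symm, hac.symm, hae.symm, hbc.symm, hbe.symm, hce.symm]),
      Finset.card_singleton]
  have freqAC : freq OP s(a, c) = 1 := by
    have hiff : ∀ p : Sym2 V, (¬ p.IsDiag ∧ ∃ u v : V, p = s(u, v) ∧
        ∃ x' y' : V, s(a, c) = s(x', y') ∧ ContainsEdge (OP u v) x' y') ↔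
        p ∈ ({s(b, e)} : Finset (Sym2 V)) := by
      intro p
      constructor
      · rintro ⟨hd, u, v, rfl, x', y', hxy, hCE⟩
        have huv : u ≠ v := by simpa [Sym2.mk_isDiag_iff] using hd
        have hCE' : ContainsEdge (OP u v) a c := by
          rcases Sym2.eq_iff.1 hxy with ⟨rfl, rfl⟩ | ⟨rfl, rfl⟩
          · exact hCE
          · exact (CE_comm _ _ _).2 hCE
        have hmem := (chAC u v huv).1 hCE'
        simpa [Finset.mem_insert] using hmem
      · intro hp
        simp only [Finset.mem_insert, Finset.mem_singleton] at hp
        rcases hp with rfl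
        · exact ⟨by simp [Sym2.mk_isDiag_iff, hbe], b, e, rfl, a, c, rfl,
            (chAC b e hbe).2 (by simp)⟩
    rw [freq_eq OP a c _ hiff]
    rw [Finset.card_singleton]
  have freqBE : freq OP s(b, e) = 1 := by
    have hiff : ∀ p : Sym2 V, (¬ p.IsDiag ∧ ∃ u v : V, p = s(u, v) ∧
        ∃ x' y' : V, s(b, e) = s(x', y') ∧ ContainsEdge (OP u v) x' y') ↔
        p ∈ ({s(a, c)} : Finset (Sym2 V)) := by
      intro p
      constructor
      · rintro ⟨hd, u, v, rfl, x', y', hxy, hCE⟩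
        have huv : u ≠ v := by simpa [Sym2.mk_isDiag_iff] using hd
        have hCE' : ContainsEdge (OP u v) b e := by
          rcases Sym2.eq_iff.1 hxy with ⟨rfl, rfl⟩ | ⟨rfl, rfl⟩
          · exact hCE
          · exact (CE_comm _ _ _).2 hCE
        have hmem := (chBE u v huv).1 hCE'
        simpa [Finset.mem_insert] using hmem
      · intro hp
        simp only [Finset.mem_insert, Finset.mem_singleton] at hp
        rcases hp with rfl
        · exact ⟨by simp [Sym2.mk_isDiag_iff, hac], a, c, rfl, b, e, rfl,
            (chBE a c hac).2 (by simp)⟩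
    rw [freq_eq OP b e _ hiff]
    rw [Finset.card_singleton]
  exact ⟨part1, part2, freqAB, freqCE, freqAE, freqBC, freqAC, freqBE⟩
end

section
/- Assume the three perfect-matching sums of K_4 are strictly ordered: w(a,b)+w(c,d) < w(a,d)+w(b,c) < w(a,c)+w(b,d). Then the unique minimum-length Hamiltonian cycle of K_4 is the 4-cycle with edges {a,b}, {b,c}, {c,d}, {d,a}; each of its four edges has frequency 3 or 5 (hence every OHC edge of K_4 is contained in at least 3 of the six optimal 4-vertex paths, i.e., at least half of them), and the two edges {a,c} and {b,d} not on this cycle each have frequency 1. -/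
open Finset

section Aux

lemma univ4 {V : Type*} [Fintype V] [DecidableEq V] (hcard : Fintype.card V = 4)
    (a b c e : V) (hab : a ≠ b) (hac : a ≠ c) (hae : a ≠ e)
    (hbc : b ≠ c) (hbe : b ≠ e) (hce : c ≠ e) :
    ∀ x : V, x = a ∨ x = b ∨ x = c ∨ x = e := by
  have h : ({a, b, c, e} : Finset V) = Finset.univ := by
    apply Finset.eq_univ_of_card
    rw [hcard]
    rw [Finset.card_insert_of_notMem (by simp [hab, hac, hae]),
        Finset.card_insert_of_notMem (by simp [hbc, hbe]),
        Finset.card_insert_of_notMem (by simp [hce]), Finset.card_singleton]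
  intro x
  have := h ▸ Finset.mem_univ x
  simpa using this

lemma hp_cases {V : Type*} [Fintype V] [DecidableEq V] (hcard : Fintype.card V = 4)
    (u v x y : V) (huv : u ≠ v) (hux : u ≠ x) (huy : u ≠ y) (hvx : v ≠ x) (hvy : v ≠ y)
    (hxy : x ≠ y)
    (huniv : ∀ z : V, z = u ∨ z = v ∨ z = x ∨ z = y)
    (P : List V) (hP : IsHamPath P u v) :
    P = [u, x, y, v] ∨ P = [u, y, x, v] := by
  obtain ⟨hnd, hmem, hhead, hlast⟩ := hP
  have hlen : P.length = 4 := by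
    have h1 : P.toFinset = Finset.univ := Finset.eq_univ_iff_forall.2 (by simpa using hmem)
    have := List.toFinset_card_of_nodup hnd
    rw [h1, Finset.card_univ, hcard] at this
    omega
  obtain ⟨p0, p1, p2, p3, rfl⟩ : ∃ p0 p1 p2 p3, P = [p0, p1, p2, p3] := by
    match P, hlen with
    | [p0, p1, p2, p3], _ => exact ⟨p0, p1, p2, p3, rfl⟩
  have h0 : p0 = u := by simpa using hhead
  have h3 : p3 = v := by simpa using hlast
  subst h0 h3
  simp only [List.nodup_cons, List.mem_cons, List.not_mem_nil, or_false,
    List.mem_singleton, List.nodup_nil, and_true, not_or] at hnd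
  have hx' := hmem x
  have hy' := hmem y
  simp only [List.mem_cons, List.not_mem_nil, or_false] at hx' hy'
  rcases hx' with rfl|rfl|rfl|rfl <;> rcases hy' with rfl|rfl|rfl|rfl <;>
    simp_all

lemma pathLen4_s17 {V : Type*} (d : V → V → ℝ) (p q r s : V) :
    pathLen d [p, q, r, s] = d p q + d q r + d r s := by
  simp [pathLen]; ring

lemma isHamPath4 {V : Type*} [DecidableEq V] (u x y v : V)
    (huv : u ≠ v) (hux : u ≠ x) (huy : u ≠ y) (hvx : v ≠ x) (hvy : v ≠ y) (hxy : x ≠ y)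
    (huniv : ∀ z : V, z = u ∨ z = v ∨ z = x ∨ z = y) :
    IsHamPath [u, x, y, v] u v := by
  refine ⟨by simp [huv, hux, huy, hvx.symm, hvy.symm, hxy], ?_, rfl, rfl⟩
  intro z; rcases huniv z with rfl|rfl|rfl|rfl <;> simp

/-- determine OP: if the path u-x-y-v is strictly shorter, OP u v = [u,x,y,v]. -/
lemma OP_eq_s17 {V : Type*} [Fintype V] [DecidableEq V] (hcard : Fintype.card V = 4)
    (w : V → V → ℝ) (OP : V → V → List V)
    (hOP : ∀ u v : V, u ≠ v → IsHamPath (OP u v) u v)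
    (hOPmin : ∀ u v : V, u ≠ v → ∀ Q : List V, IsHamPath Q u v →
      pathLen w (OP u v) ≤ pathLen w Q)
    (u v x y : V) (huv : u ≠ v) (hux : u ≠ x) (huy : u ≠ y) (hvx : v ≠ x) (hvy : v ≠ y)
    (hxy : x ≠ y)
    (huniv : ∀ z : V, z = u ∨ z = v ∨ z = x ∨ z = y)
    (hlt : w u x + w x y + w y v < w u y + w y x + w x v) :
    OP u v = [u, x, y, v] := by
  rcases hp_cases hcard u v x y huv hux huy hvx hvy hxy huniv (OP u v) (hOP u v huv) with
    h | h
  · exact h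
  · exfalso
    have h2 := hOPmin u v huv [u, x, y, v]
      (isHamPath4 u x y v huv hux huy hvx hvy hxy huniv)
    rw [h, pathLen4_s17, pathLen4_s17] at h2
    linarith

lemma cycLen4 {V : Type*} (d : V → V → ℝ) (p q r s : V) :
    cycLen d [p, q, r, s] = d p q + d q r + d r s + d s p := by
  simp [cycLen, pathLen]; ring

lemma hc_cases {V : Type*} [Fintype V] [DecidableEq V] (hcard : Fintype.card V = 4)
    (C : List V) (hnd : C.Nodup) (hmem : ∀ x : V, x ∈ C) :
    ∃ p0 p1 p2 p3, C = [p0, p1, p2, p3] ∧ p0 ≠ p1 ∧ p0 ≠ p2 ∧ p0 ≠ p3 ∧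
      p1 ≠ p2 ∧ p1 ≠ p3 ∧ p2 ≠ p3 := by
  have hlen : C.length = 4 := by
    have h1 : C.toFinset = Finset.univ := Finset.eq_univ_iff_forall.2 (by simpa using hmem)
    have := List.toFinset_card_of_nodup hnd
    rw [h1, Finset.card_univ, hcard] at this
    omega
  obtain ⟨p0, p1, p2, p3, rfl⟩ : ∃ p0 p1 p2 p3, C = [p0, p1, p2, p3] := by
    match C, hlen with
    | [p0, p1, p2, p3], _ => exact ⟨p0, p1, p2, p3, rfl⟩
  simp only [List.nodup_cons, List.mem_cons, List.not_mem_nil, or_false,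
    List.mem_singleton, List.nodup_nil, and_true, not_or] at hnd
  exact ⟨p0, p1, p2, p3, rfl, by tauto, by tauto, by tauto, by tauto, by tauto, by tauto⟩

lemma cyc_min {V : Type*} [Fintype V] [DecidableEq V] (hcard : Fintype.card V = 4)
    (a b c e : V) (hab : a ≠ b) (hac : a ≠ c) (hae : a ≠ e)
    (hbc : b ≠ c) (hbe : b ≠ e) (hce : c ≠ e)
    (w : V → V → ℝ) (hwsymm : ∀ u v : V, w u v = w v u)
    (hord₁ : w a b + w c e < w a e + w b c)
    (hord₂ : w a e + w b c < w a c + w b e)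
    (huniv : ∀ z : V, z = a ∨ z = b ∨ z = c ∨ z = e)
    (C : List V) (hnd : C.Nodup) (hmem : ∀ x : V, x ∈ C) :
    cycLen w [a, b, c, e] ≤ cycLen w C := by
  obtain ⟨p0, p1, p2, p3, rfl, h01, h02, h03, h12, h13, h23⟩ := hc_cases hcard C hnd hmem
  rcases huniv p0 with rfl|rfl|rfl|rfl <;> rcases huniv p1 with rfl|rfl|rfl|rfl <;>
    rcases huniv p2 with rfl|rfl|rfl|rfl <;> rcases huniv p3 with rfl|rfl|rfl|rfl <;>
    first
      | exact absurd rfl h01 | exact absurd rfl h02 | exact absurd rfl h03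
      | exact absurd rfl h12 | exact absurd rfl h13 | exact absurd rfl h23
      | (simp only [cycLen4]
         linarith [hwsymm p0 p1, hwsymm p0 p2, hwsymm p0 p3, hwsymm p1 p2, hwsymm p1 p3,
           hwsymm p2 p3, hwsymm p1 p0, hwsymm p2 p0, hwsymm p3 p0, hwsymm p2 p1,
           hwsymm p3 p1, hwsymm p3 p2])

lemma cyc_unique {V : Type*} [Fintype V] [DecidableEq V] (hcard : Fintype.card V = 4)
    (a b c e : V) (hab : a ≠ b) (hac : a ≠ c) (hae : a ≠ e)
    (hbc : b ≠ c) (hbe : b ≠ e) (hce : c ≠ e)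
    (w : V → V → ℝ) (hwsymm : ∀ u v : V, w u v = w v u)
    (hord₁ : w a b + w c e < w a e + w b c)
    (hord₂ : w a e + w b c < w a c + w b e)
    (huniv : ∀ z : V, z = a ∨ z = b ∨ z = c ∨ z = e)
    (C : List V) (hnd : C.Nodup) (hmem : ∀ x : V, x ∈ C)
    (heq : cycLen w C = cycLen w [a, b, c, e]) :
    ∃ k : ℕ, C = ([a, b, c, e] : List V).rotate k ∨
      C = ([a, b, c, e] : List V).reverse.rotate k := by
  obtain ⟨p0, p1, p2, p3, rfl, h01, h02, h03, h12, h13, h23⟩ := hc_cases hcard C hnd hmem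
  rcases huniv p0 with rfl|rfl|rfl|rfl <;> rcases huniv p1 with rfl|rfl|rfl|rfl <;>
    rcases huniv p2 with rfl|rfl|rfl|rfl <;> rcases huniv p3 with rfl|rfl|rfl|rfl <;>
    first
      | exact absurd rfl h01 | exact absurd rfl h02 | exact absurd rfl h03
      | exact absurd rfl h12 | exact absurd rfl h13 | exact absurd rfl h23
      | (refine ⟨0, Or.inl ?_⟩; simp [List.rotate]; done)
      | (refine ⟨1, Or.inl ?_⟩; simp [List.rotate]; done)
      | (refine ⟨2, Or.inl ?_⟩; simp [List.rotate]; done)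
      | (refine ⟨3, Or.inl ?_⟩; simp [List.rotate]; done)
      | (refine ⟨0, Or.inr ?_⟩; simp [List.rotate]; done)
      | (refine ⟨1, Or.inr ?_⟩; simp [List.rotate]; done)
      | (refine ⟨2, Or.inr ?_⟩; simp [List.rotate]; done)
      | (refine ⟨3, Or.inr ?_⟩; simp [List.rotate]; done)
      | (exfalso
         simp only [cycLen4] at heq
         linarith [hwsymm p0 p1, hwsymm p0 p2, hwsymm p0 p3, hwsymm p1 p2, hwsymm p1 p3,
           hwsymm p2 p3, hwsymm p1 p0, hwsymm p2 p0, hwsymm p3 p0, hwsymm p2 p1,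
           hwsymm p3 p1, hwsymm p3 p2])

lemma infix_rev {V : Type*} (x y : V) (L : List V) : [x, y] <:+: L.reverse ↔ [y, x] <:+: L := by
  rw [← List.reverse_infix]; simp

lemma ce_rev {V : Type*} (x y : V) (L : List V) :
    ContainsEdge L.reverse x y ↔ ContainsEdge L x y := by
  unfold ContainsEdge; rw [infix_rev, infix_rev]; tauto

lemma exists_ce {V : Type*} (L : List V) (x0 y0 : V) :
    (∃ x y : V, s(x0, y0) = s(x, y) ∧ ContainsEdge L x y) ↔ ContainsEdge L x0 y0 := by
  constructor
  · rintro ⟨x, y, hxy, h⟩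
    rw [Sym2.eq_iff] at hxy
    rcases hxy with ⟨rfl, rfl⟩ | ⟨rfl, rfl⟩
    · exact h
    · exact Or.symm h
  · intro h; exact ⟨x0, y0, rfl, h⟩

lemma freq_eq_card {V : Type*} [Fintype V] [DecidableEq V] (OP : V → V → List V)
    (e0 : Sym2 V) (S : Finset (Sym2 V))
    (h : ∀ p : Sym2 V, (¬ p.IsDiag ∧
      ∃ u v : V, p = s(u, v) ∧ ∃ x y : V, e0 = s(x, y) ∧ ContainsEdge (OP u v) x y) ↔ p ∈ S) :
    freq OP e0 = S.card := by
  have hs : {p : Sym2 V | ¬ p.IsDiag ∧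
      ∃ u v : V, p = s(u, v) ∧ ∃ x y : V, e0 = s(x, y) ∧ ContainsEdge (OP u v) x y} = ↑S :=
    Set.ext fun p => (h p).trans Finset.mem_coe.symm
  calc freq OP e0
      = ({p : Sym2 V | ¬ p.IsDiag ∧
        ∃ u v : V, p = s(u, v) ∧ ∃ x y : V, e0 = s(x, y) ∧
          ContainsEdge (OP u v) x y}).ncard := rfl
    _ = (↑S : Set (Sym2 V)).ncard := by rw [hs]
    _ = S.card := Set.ncard_coe_finset S

lemma mem_ab {V : Type*} [Fintype V] [DecidableEq V]
    (a b c e : V) (hab : a ≠ b) (hac : a ≠ c) (hae : a ≠ e)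
    (hbc : b ≠ c) (hbe : b ≠ e) (hce : c ≠ e)
    (huniv : ∀ z : V, z = a ∨ z = b ∨ z = c ∨ z = e)
    (OP : V → V → List V)
    (h1 : OP a b = [a, e, c, b]) (h2 : OP c e = [c, b, a, e])
    (h3 : OP a c = [a, b, e, c]) (h4 : OP b e = [b, a, c, e])
    (h5 : OP a e = [a, b, c, e]) (h6 : OP b c = [b, a, e, c])
    (h1' : OP b a = [b, c, e, a]) (h2' : OP e c = [e, a, b, c])
    (h3' : OP c a = [c, e, b, a]) (h4' : OP e b = [e, c, a, b])
    (h5' : OP e a = [e, c, b, a]) (h6' : OP c b = [c, e, a, b]) :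
    ∀ p : Sym2 V, (¬ p.IsDiag ∧
      ∃ u v : V, p = s(u, v) ∧ ∃ x y : V, s(a, b) = s(x, y) ∧
        ContainsEdge (OP u v) x y) ↔
      p ∈ ({s(a, c), s(a, e), s(b, c), s(b, e), s(c, e)} : Finset (Sym2 V)) := by
  have hba := hab.symm
  have hca := hac.symm
  have hea := hae.symm
  have hcb := hbc.symm
  have heb := hbe.symm
  have hec := hce.symm
  intro p
  constructor
  · rintro ⟨hnd, u, v, rfl, hcon⟩
    rw [exists_ce] at hcon
    have huv : u ≠ v := by rintro rfl; exact hnd (by simp)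
    have hvu : v ≠ u := huv.symm
    rcases huniv u with rfl | rfl | rfl | rfl <;> rcases huniv v with rfl | rfl | rfl | rfl <;>
      simp_all [ContainsEdge, List.infix_cons_iff, List.cons_prefix_cons, Sym2.eq_iff] <;>
      tauto
  · intro hp
    simp only [Finset.mem_insert, Finset.mem_singleton] at hp
    have key : ∀ u v : V, ContainsEdge (OP u v) a b →
        ¬ (s(u,v) : Sym2 V).IsDiag → (¬ (s(u,v) : Sym2 V).IsDiag ∧
        ∃ u' v' : V, (s(u,v) : Sym2 V) = s(u', v') ∧
          ∃ x y : V, (s(a, b) : Sym2 V) = s(x, y) ∧ ContainsEdge (OP u' v') x y) :=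
      fun u v hc hd => ⟨hd, u, v, rfl, a, b, rfl, hc⟩
    rcases hp with rfl | rfl | rfl | rfl | rfl
    · exact key a c (by simp [h3, ContainsEdge, List.infix_cons_iff, List.cons_prefix_cons])
        (by simp [hac])
    · exact key a e (by simp [h5, ContainsEdge, List.infix_cons_iff, List.cons_prefix_cons])
        (by simp [hae])
    · exact key b c (by simp [h6, ContainsEdge, List.infix_cons_iff, List.cons_prefix_cons])
        (by simp [hbc])
    · exact key b e (by simp [h4, ContainsEdge, List.infix_cons_iff, List.cons_prefix_cons])
        (by simp [hbe])
    · exact key c e (by simp [h2, ContainsEdge, List.infix_cons_iff, List.cons_prefix_cons])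
        (by simp [hce])
lemma mem_bc {V : Type*} [Fintype V] [DecidableEq V]
    (a b c e : V) (hab : a ≠ b) (hac : a ≠ c) (hae : a ≠ e)
    (hbc : b ≠ c) (hbe : b ≠ e) (hce : c ≠ e)
    (huniv : ∀ z : V, z = a ∨ z = b ∨ z = c ∨ z = e)
    (OP : V → V → List V)
    (h1 : OP a b = [a, e, c, b]) (h2 : OP c e = [c, b, a, e])
    (h3 : OP a c = [a, b, e, c]) (h4 : OP b e = [b, a, c, e])
    (h5 : OP a e = [a, b, c, e]) (h6 : OP b c = [b, a, e, c])
    (h1' : OP b a = [b, c, e, a]) (h2' : OP e c = [e, a, b, c])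
    (h3' : OP c a = [c, e, b, a]) (h4' : OP e b = [e, c, a, b])
    (h5' : OP e a = [e, c, b, a]) (h6' : OP c b = [c, e, a, b]) :
    ∀ p : Sym2 V, (¬ p.IsDiag ∧
      ∃ u v : V, p = s(u, v) ∧ ∃ x y : V, s(b, c) = s(x, y) ∧
        ContainsEdge (OP u v) x y) ↔
      p ∈ ({s(a, b), s(a, e), s(c, e)} : Finset (Sym2 V)) := by
  have hba := hab.symm
  have hca := hac.symm
  have hea := hae.symm
  have hcb := hbc.symm
  have heb := hbe.symm
  have hec := hce.symm
  intro p
  constructor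
  · rintro ⟨hnd, u, v, rfl, hcon⟩
    rw [exists_ce] at hcon
    have huv : u ≠ v := by rintro rfl; exact hnd (by simp)
    have hvu : v ≠ u := huv.symm
    rcases huniv u with rfl | rfl | rfl | rfl <;> rcases huniv v with rfl | rfl | rfl | rfl <;>
      simp_all [ContainsEdge, List.infix_cons_iff, List.cons_prefix_cons, Sym2.eq_iff] <;>
      tauto
  · intro hp
    simp only [Finset.mem_insert, Finset.mem_singleton] at hp
    have key : ∀ u v : V, ContainsEdge (OP u v) b c →
        ¬ (s(u,v) : Sym2 V).IsDiag → (¬ (s(u,v) : Sym2 V).IsDiag ∧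
        ∃ u' v' : V, (s(u,v) : Sym2 V) = s(u', v') ∧
          ∃ x y : V, (s(b, c) : Sym2 V) = s(x, y) ∧ ContainsEdge (OP u' v') x y) :=
      fun u v hc hd => ⟨hd, u, v, rfl, b, c, rfl, hc⟩
    rcases hp with rfl | rfl | rfl
    · exact key a b (by simp [h1, ContainsEdge, List.infix_cons_iff, List.cons_prefix_cons])
        (by simp [hab])
    · exact key a e (by simp [h5, ContainsEdge, List.infix_cons_iff, List.cons_prefix_cons])
        (by simp [hae])
    · exact key c e (by simp [h2, ContainsEdge, List.infix_cons_iff, List.cons_prefix_cons])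
        (by simp [hce])
lemma mem_ce {V : Type*} [Fintype V] [DecidableEq V]
    (a b c e : V) (hab : a ≠ b) (hac : a ≠ c) (hae : a ≠ e)
    (hbc : b ≠ c) (hbe : b ≠ e) (hce : c ≠ e)
    (huniv : ∀ z : V, z = a ∨ z = b ∨ z = c ∨ z = e)
    (OP : V → V → List V)
    (h1 : OP a b = [a, e, c, b]) (h2 : OP c e = [c, b, a, e])
    (h3 : OP a c = [a, b, e, c]) (h4 : OP b e = [b, a, c, e])
    (h5 : OP a e = [a, b, c, e]) (h6 : OP b c = [b, a, e, c])
    (h1' : OP b a = [b, c, e, a]) (h2' : OP e c = [e, a, b, c])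
    (h3' : OP c a = [c, e, b, a]) (h4' : OP e b = [e, c, a, b])
    (h5' : OP e a = [e, c, b, a]) (h6' : OP c b = [c, e, a, b]) :
    ∀ p : Sym2 V, (¬ p.IsDiag ∧
      ∃ u v : V, p = s(u, v) ∧ ∃ x y : V, s(c, e) = s(x, y) ∧
        ContainsEdge (OP u v) x y) ↔
      p ∈ ({s(a, b), s(a, c), s(a, e), s(b, c), s(b, e)} : Finset (Sym2 V)) := by
  have hba := hab.symm
  have hca := hac.symm
  have hea := hae.symm
  have hcb := hbc.symm
  have heb := hbe.symm
  have hec := hce.symm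
  intro p
  constructor
  · rintro ⟨hnd, u, v, rfl, hcon⟩
    rw [exists_ce] at hcon
    have huv : u ≠ v := by rintro rfl; exact hnd (by simp)
    have hvu : v ≠ u := huv.symm
    rcases huniv u with rfl | rfl | rfl | rfl <;> rcases huniv v with rfl | rfl | rfl | rfl <;>
      simp_all [ContainsEdge, List.infix_cons_iff, List.cons_prefix_cons, Sym2.eq_iff] <;>
      tauto
  · intro hp
    simp only [Finset.mem_insert, Finset.mem_singleton] at hp
    have key : ∀ u v : V, ContainsEdge (OP u v) c e →
        ¬ (s(u,v) : Sym2 V).IsDiag → (¬ (s(u,v) : Sym2 V).IsDiag ∧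
        ∃ u' v' : V, (s(u,v) : Sym2 V) = s(u', v') ∧
          ∃ x y : V, (s(c, e) : Sym2 V) = s(x, y) ∧ ContainsEdge (OP u' v') x y) :=
      fun u v hc hd => ⟨hd, u, v, rfl, c, e, rfl, hc⟩
    rcases hp with rfl | rfl | rfl | rfl | rfl
    · exact key a b (by simp [h1, ContainsEdge, List.infix_cons_iff, List.cons_prefix_cons])
        (by simp [hab])
    · exact key a c (by simp [h3, ContainsEdge, List.infix_cons_iff, List.cons_prefix_cons])
        (by simp [hac])
    · exact key a e (by simp [h5, ContainsEdge, List.infix_cons_iff, List.cons_prefix_cons])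
        (by simp [hae])
    · exact key b c (by simp [h6, ContainsEdge, List.infix_cons_iff, List.cons_prefix_cons])
        (by simp [hbc])
    · exact key b e (by simp [h4, ContainsEdge, List.infix_cons_iff, List.cons_prefix_cons])
        (by simp [hbe])
lemma mem_ea {V : Type*} [Fintype V] [DecidableEq V]
    (a b c e : V) (hab : a ≠ b) (hac : a ≠ c) (hae : a ≠ e)
    (hbc : b ≠ c) (hbe : b ≠ e) (hce : c ≠ e)
    (huniv : ∀ z : V, z = a ∨ z = b ∨ z = c ∨ z = e)
    (OP : V → V → List V)
    (h1 : OP a b = [a, e, c, b]) (h2 : OP c e = [c, b, a, e])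
    (h3 : OP a c = [a, b, e, c]) (h4 : OP b e = [b, a, c, e])
    (h5 : OP a e = [a, b, c, e]) (h6 : OP b c = [b, a, e, c])
    (h1' : OP b a = [b, c, e, a]) (h2' : OP e c = [e, a, b, c])
    (h3' : OP c a = [c, e, b, a]) (h4' : OP e b = [e, c, a, b])
    (h5' : OP e a = [e, c, b, a]) (h6' : OP c b = [c, e, a, b]) :
    ∀ p : Sym2 V, (¬ p.IsDiag ∧
      ∃ u v : V, p = s(u, v) ∧ ∃ x y : V, s(e, a) = s(x, y) ∧
        ContainsEdge (OP u v) x y) ↔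
      p ∈ ({s(a, b), s(b, c), s(c, e)} : Finset (Sym2 V)) := by
  have hba := hab.symm
  have hca := hac.symm
  have hea := hae.symm
  have hcb := hbc.symm
  have heb := hbe.symm
  have hec := hce.symm
  intro p
  constructor
  · rintro ⟨hnd, u, v, rfl, hcon⟩
    rw [exists_ce] at hcon
    have huv : u ≠ v := by rintro rfl; exact hnd (by simp)
    have hvu : v ≠ u := huv.symm
    rcases huniv u with rfl | rfl | rfl | rfl <;> rcases huniv v with rfl | rfl | rfl | rfl <;>
      simp_all [ContainsEdge, List.infix_cons_iff, List.cons_prefix_cons, Sym2.eq_iff] <;>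
      tauto
  · intro hp
    simp only [Finset.mem_insert, Finset.mem_singleton] at hp
    have key : ∀ u v : V, ContainsEdge (OP u v) e a →
        ¬ (s(u,v) : Sym2 V).IsDiag → (¬ (s(u,v) : Sym2 V).IsDiag ∧
        ∃ u' v' : V, (s(u,v) : Sym2 V) = s(u', v') ∧
          ∃ x y : V, (s(e, a) : Sym2 V) = s(x, y) ∧ ContainsEdge (OP u' v') x y) :=
      fun u v hc hd => ⟨hd, u, v, rfl, e, a, rfl, hc⟩
    rcases hp with rfl | rfl | rfl
    · exact key a b (by simp [h1, ContainsEdge, List.infix_cons_iff, List.cons_prefix_cons])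
        (by simp [hab])
    · exact key b c (by simp [h6, ContainsEdge, List.infix_cons_iff, List.cons_prefix_cons])
        (by simp [hbc])
    · exact key c e (by simp [h2, ContainsEdge, List.infix_cons_iff, List.cons_prefix_cons])
        (by simp [hce])
lemma mem_ac {V : Type*} [Fintype V] [DecidableEq V]
    (a b c e : V) (hab : a ≠ b) (hac : a ≠ c) (hae : a ≠ e)
    (hbc : b ≠ c) (hbe : b ≠ e) (hce : c ≠ e)
    (huniv : ∀ z : V, z = a ∨ z = b ∨ z = c ∨ z = e)
    (OP : V → V → List V)
    (h1 : OP a b = [a, e, c, b]) (h2 : OP c e = [c, b, a, e])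
    (h3 : OP a c = [a, b, e, c]) (h4 : OP b e = [b, a, c, e])
    (h5 : OP a e = [a, b, c, e]) (h6 : OP b c = [b, a, e, c])
    (h1' : OP b a = [b, c, e, a]) (h2' : OP e c = [e, a, b, c])
    (h3' : OP c a = [c, e, b, a]) (h4' : OP e b = [e, c, a, b])
    (h5' : OP e a = [e, c, b, a]) (h6' : OP c b = [c, e, a, b]) :
    ∀ p : Sym2 V, (¬ p.IsDiag ∧
      ∃ u v : V, p = s(u, v) ∧ ∃ x y : V, s(a, c) = s(x, y) ∧
        ContainsEdge (OP u v) x y) ↔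
      p ∈ ({s(b, e)} : Finset (Sym2 V)) := by
  have hba := hab.symm
  have hca := hac.symm
  have hea := hae.symm
  have hcb := hbc.symm
  have heb := hbe.symm
  have hec := hce.symm
  intro p
  constructor
  · rintro ⟨hnd, u, v, rfl, hcon⟩
    rw [exists_ce] at hcon
    have huv : u ≠ v := by rintro rfl; exact hnd (by simp)
    have hvu : v ≠ u := huv.symm
    rcases huniv u with rfl | rfl | rfl | rfl <;> rcases huniv v with rfl | rfl | rfl | rfl <;>
      simp_all [ContainsEdge, List.infix_cons_iff, List.cons_prefix_cons, Sym2.eq_iff] <;>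
      tauto
  · intro hp
    simp only [Finset.mem_singleton] at hp
    have key : ∀ u v : V, ContainsEdge (OP u v) a c →
        ¬ (s(u,v) : Sym2 V).IsDiag → (¬ (s(u,v) : Sym2 V).IsDiag ∧
        ∃ u' v' : V, (s(u,v) : Sym2 V) = s(u', v') ∧
          ∃ x y : V, (s(a, c) : Sym2 V) = s(x, y) ∧ ContainsEdge (OP u' v') x y) :=
      fun u v hc hd => ⟨hd, u, v, rfl, a, c, rfl, hc⟩
    rcases hp with rfl
    · exact key b e (by simp [h4, ContainsEdge, List.infix_cons_iff, List.cons_prefix_cons])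
        (by simp [hbe])
lemma mem_be {V : Type*} [Fintype V] [DecidableEq V]
    (a b c e : V) (hab : a ≠ b) (hac : a ≠ c) (hae : a ≠ e)
    (hbc : b ≠ c) (hbe : b ≠ e) (hce : c ≠ e)
    (huniv : ∀ z : V, z = a ∨ z = b ∨ z = c ∨ z = e)
    (OP : V → V → List V)
    (h1 : OP a b = [a, e, c, b]) (h2 : OP c e = [c, b, a, e])
    (h3 : OP a c = [a, b, e, c]) (h4 : OP b e = [b, a, c, e])
    (h5 : OP a e = [a, b, c, e]) (h6 : OP b c = [b, a, e, c])
    (h1' : OP b a = [b, c, e, a]) (h2' : OP e c = [e, a, b, c])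
    (h3' : OP c a = [c, e, b, a]) (h4' : OP e b = [e, c, a, b])
    (h5' : OP e a = [e, c, b, a]) (h6' : OP c b = [c, e, a, b]) :
    ∀ p : Sym2 V, (¬ p.IsDiag ∧
      ∃ u v : V, p = s(u, v) ∧ ∃ x y : V, s(b, e) = s(x, y) ∧
        ContainsEdge (OP u v) x y) ↔
      p ∈ ({s(a, c)} : Finset (Sym2 V)) := by
  have hba := hab.symm
  have hca := hac.symm
  have hea := hae.symm
  have hcb := hbc.symm
  have heb := hbe.symm
  have hec := hce.symm
  intro p
  constructor
  · rintro ⟨hnd, u, v, rfl, hcon⟩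
    rw [exists_ce] at hcon
    have huv : u ≠ v := by rintro rfl; exact hnd (by simp)
    have hvu : v ≠ u := huv.symm
    rcases huniv u with rfl | rfl | rfl | rfl <;> rcases huniv v with rfl | rfl | rfl | rfl <;>
      simp_all [ContainsEdge, List.infix_cons_iff, List.cons_prefix_cons, Sym2.eq_iff] <;>
      tauto
  · intro hp
    simp only [Finset.mem_singleton] at hp
    have key : ∀ u v : V, ContainsEdge (OP u v) b e →
        ¬ (s(u,v) : Sym2 V).IsDiag → (¬ (s(u,v) : Sym2 V).IsDiag ∧
        ∃ u' v' : V, (s(u,v) : Sym2 V) = s(u', v') ∧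
          ∃ x y : V, (s(b, e) : Sym2 V) = s(x, y) ∧ ContainsEdge (OP u' v') x y) :=
      fun u v hc hd => ⟨hd, u, v, rfl, b, e, rfl, hc⟩
    rcases hp with rfl
    · exact key a c (by simp [h3, ContainsEdge, List.infix_cons_iff, List.cons_prefix_cons])
        (by simp [hac])
end Aux

/-- Under the strict ordering of the three matching sums of
`K₄`, the unique minimum-length Hamiltonian cycle is the 4-cycle
`a - b - c - d - a`; each of its four edges has frequency `3` or `5` (hence at
least `3`, at least half of the six optimal paths), and the two edges `{a,c}`
and `{b,d}` off this cycle have frequency `1`. -/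
theorem stmt17 {V : Type*} [Fintype V] [DecidableEq V] (hcard : Fintype.card V = 4)
    (a b c e : V) (hab : a ≠ b) (hac : a ≠ c) (hae : a ≠ e)
    (hbc : b ≠ c) (hbe : b ≠ e) (hce : c ≠ e)
    (w : V → V → ℝ) (hwsymm : ∀ u v : V, w u v = w v u)
    (hwpos : ∀ u v : V, u ≠ v → 0 < w u v)
    (hord₁ : w a b + w c e < w a e + w b c)
    (hord₂ : w a e + w b c < w a c + w b e)
    (OP : V → V → List V)
    (hOP : ∀ u v : V, u ≠ v → IsHamPath (OP u v) u v)
    (hOPmin : ∀ u v : V, u ≠ v → ∀ Q : List V, IsHamPath Q u v →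
      pathLen w (OP u v) ≤ pathLen w Q)
    (hOPsymm : ∀ u v : V, OP v u = (OP u v).reverse) :
    (∀ C : List V, IsHamCycle C → cycLen w [a, b, c, e] ≤ cycLen w C) ∧
    (∀ C : List V, IsHamCycle C → cycLen w C = cycLen w [a, b, c, e] →
      ∃ k : ℕ, C = ([a, b, c, e] : List V).rotate k ∨
        C = ([a, b, c, e] : List V).reverse.rotate k) ∧
    (freq OP s(a, b) = 3 ∨ freq OP s(a, b) = 5) ∧ 3 ≤ freq OP s(a, b) ∧
    (freq OP s(b, c) = 3 ∨ freq OP s(b, c) = 5) ∧ 3 ≤ freq OP s(b, c) ∧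
    (freq OP s(c, e) = 3 ∨ freq OP s(c, e) = 5) ∧ 3 ≤ freq OP s(c, e) ∧
    (freq OP s(e, a) = 3 ∨ freq OP s(e, a) = 5) ∧ 3 ≤ freq OP s(e, a) ∧
    freq OP s(a, c) = 1 ∧ freq OP s(b, e) = 1 := by
  have huniv := univ4 hcard a b c e hab hac hae hbc hbe hce
  have h1 : OP a b = [a, e, c, b] :=
    OP_eq_s17 hcard w OP hOP hOPmin a b e c hab hae hac hbe hbc hce.symm
      (fun z => by rcases huniv z with rfl|rfl|rfl|rfl <;> tauto)
      (by linarith [hwsymm e c, hwsymm c b, hwsymm e b])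
  have h2 : OP c e = [c, b, a, e] :=
    OP_eq_s17 hcard w OP hOP hOPmin c e b a hce hbc.symm hac.symm hbe.symm hae.symm hab.symm
      (fun z => by rcases huniv z with rfl|rfl|rfl|rfl <;> tauto)
      (by linarith [hwsymm c b, hwsymm b a, hwsymm c a])
  have h3 : OP a c = [a, b, e, c] :=
    OP_eq_s17 hcard w OP hOP hOPmin a c b e hac hab hae hbc.symm hce hbe
      (fun z => by rcases huniv z with rfl|rfl|rfl|rfl <;> tauto)
      (by linarith [hwsymm e c, hwsymm e b])
  have h4 : OP b e = [b, a, c, e] :=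
    OP_eq_s17 hcard w OP hOP hOPmin b e a c hbe hab.symm hbc hae.symm hce.symm hac
      (fun z => by rcases huniv z with rfl|rfl|rfl|rfl <;> tauto)
      (by linarith [hwsymm b a, hwsymm c a])
  have h5 : OP a e = [a, b, c, e] :=
    OP_eq_s17 hcard w OP hOP hOPmin a e b c hae hab hac hbe.symm hce.symm hbc
      (fun z => by rcases huniv z with rfl|rfl|rfl|rfl <;> tauto)
      (by linarith [hwsymm c b])
  have h6 : OP b c = [b, a, e, c] :=
    OP_eq_s17 hcard w OP hOP hOPmin b c a e hbc hab.symm hbe hac.symm hce hae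
      (fun z => by rcases huniv z with rfl|rfl|rfl|rfl <;> tauto)
      (by linarith [hwsymm b a, hwsymm e c, hwsymm e a])
  have h1' : OP b a = [b, c, e, a] := by rw [hOPsymm a b, h1]; rfl
  have h2' : OP e c = [e, a, b, c] := by rw [hOPsymm c e, h2]; rfl
  have h3' : OP c a = [c, e, b, a] := by rw [hOPsymm a c, h3]; rfl
  have h4' : OP e b = [e, c, a, b] := by rw [hOPsymm b e, h4]; rfl
  have h5' : OP e a = [e, c, b, a] := by rw [hOPsymm a e, h5]; rfl
  have h6' : OP c b = [c, e, a, b] := by rw [hOPsymm b c, h6]; rfl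
  refine ⟨?_, ?_, ?_, ?_, ?_, ?_, ?_, ?_, ?_, ?_, ?_, ?_⟩
  · exact fun C hC => cyc_min hcard a b c e hab hac hae hbc hbe hce w hwsymm hord₁ hord₂
      huniv C hC.1 hC.2
  · exact fun C hC heq => cyc_unique hcard a b c e hab hac hae hbc hbe hce w hwsymm hord₁ hord₂
      huniv C hC.1 hC.2 heq
  · have hfr : freq OP s(a, b) = ({s(a, c), s(a, e), s(b, c), s(b, e), s(c, e)} : Finset (Sym2 V)).card :=
      freq_eq_card OP _ _ (mem_ab a b c e hab hac hae hbc hbe hce huniv OP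
        h1 h2 h3 h4 h5 h6 h1' h2' h3' h4' h5' h6')
    have hcardS : ({s(a, c), s(a, e), s(b, c), s(b, e), s(c, e)} : Finset (Sym2 V)).card = 5 := by
      rw [Finset.card_insert_of_notMem (by simp [Sym2.eq_iff, hab, hac, hae, hbc, hbe, hce, hab.symm, hac.symm, hae.symm, hbc.symm, hbe.symm, hce.symm]),
        Finset.card_insert_of_notMem (by simp [Sym2.eq_iff, hab, hac, hae, hbc, hbe, hce, hab.symm, hac.symm, hae.symm, hbc.symm, hbe.symm, hce.symm]),
        Finset.card_insert_of_notMem (by simp [Sym2.eq_iff, hab, hac, hae, hbc, hbe, hce, hab.symm, hac.symm, hae.symm, hbc.symm, hbe.symm, hce.symm]),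
        Finset.card_insert_of_notMem (by simp [Sym2.eq_iff, hab, hac, hae, hbc, hbe, hce, hab.symm, hac.symm, hae.symm, hbc.symm, hbe.symm, hce.symm]), Finset.card_singleton]
    exact Or.inr (by rw [hfr, hcardS])
  · have hfr : freq OP s(a, b) = ({s(a, c), s(a, e), s(b, c), s(b, e), s(c, e)} : Finset (Sym2 V)).card :=
      freq_eq_card OP _ _ (mem_ab a b c e hab hac hae hbc hbe hce huniv OP
        h1 h2 h3 h4 h5 h6 h1' h2' h3' h4' h5' h6')
    have hcardS : ({s(a, c), s(a, e), s(b, c), s(b, e), s(c, e)} : Finset (Sym2 V)).card = 5 := by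
      rw [Finset.card_insert_of_notMem (by simp [Sym2.eq_iff, hab, hac, hae, hbc, hbe, hce, hab.symm, hac.symm, hae.symm, hbc.symm, hbe.symm, hce.symm]),
        Finset.card_insert_of_notMem (by simp [Sym2.eq_iff, hab, hac, hae, hbc, hbe, hce, hab.symm, hac.symm, hae.symm, hbc.symm, hbe.symm, hce.symm]),
        Finset.card_insert_of_notMem (by simp [Sym2.eq_iff, hab, hac, hae, hbc, hbe, hce, hab.symm, hac.symm, hae.symm, hbc.symm, hbe.symm, hce.symm]),
        Finset.card_insert_of_notMem (by simp [Sym2.eq_iff, hab, hac, hae, hbc, hbe, hce, hab.symm, hac.symm, hae.symm, hbc.symm, hbe.symm, hce.symm]), Finset.card_singleton]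
    have hfin := hfr.trans hcardS
    omega
  · have hfr : freq OP s(b, c) = ({s(a, b), s(a, e), s(c, e)} : Finset (Sym2 V)).card :=
      freq_eq_card OP _ _ (mem_bc a b c e hab hac hae hbc hbe hce huniv OP
        h1 h2 h3 h4 h5 h6 h1' h2' h3' h4' h5' h6')
    have hcardS : ({s(a, b), s(a, e), s(c, e)} : Finset (Sym2 V)).card = 3 := by
      rw [Finset.card_insert_of_notMem (by simp [Sym2.eq_iff, hab, hac, hae, hbc, hbe, hce, hab.symm, hac.symm, hae.symm, hbc.symm, hbe.symm, hce.symm]),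
        Finset.card_insert_of_notMem (by simp [Sym2.eq_iff, hab, hac, hae, hbc, hbe, hce, hab.symm, hac.symm, hae.symm, hbc.symm, hbe.symm, hce.symm]), Finset.card_singleton]
    exact Or.inl (by rw [hfr, hcardS])
  · have hfr : freq OP s(b, c) = ({s(a, b), s(a, e), s(c, e)} : Finset (Sym2 V)).card :=
      freq_eq_card OP _ _ (mem_bc a b c e hab hac hae hbc hbe hce huniv OP
        h1 h2 h3 h4 h5 h6 h1' h2' h3' h4' h5' h6')
    have hcardS : ({s(a, b), s(a, e), s(c, e)} : Finset (Sym2 V)).card = 3 := by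
      rw [Finset.card_insert_of_notMem (by simp [Sym2.eq_iff, hab, hac, hae, hbc, hbe, hce, hab.symm, hac.symm, hae.symm, hbc.symm, hbe.symm, hce.symm]),
        Finset.card_insert_of_notMem (by simp [Sym2.eq_iff, hab, hac, hae, hbc, hbe, hce, hab.symm, hac.symm, hae.symm, hbc.symm, hbe.symm, hce.symm]), Finset.card_singleton]
    have hfin := hfr.trans hcardS
    omega
  · have hfr : freq OP s(c, e) = ({s(a, b), s(a, c), s(a, e), s(b, c), s(b, e)} : Finset (Sym2 V)).card :=
      freq_eq_card OP _ _ (mem_ce a b c e hab hac hae hbc hbe hce huniv OP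
        h1 h2 h3 h4 h5 h6 h1' h2' h3' h4' h5' h6')
    have hcardS : ({s(a, b), s(a, c), s(a, e), s(b, c), s(b, e)} : Finset (Sym2 V)).card = 5 := by
      rw [Finset.card_insert_of_notMem (by simp [Sym2.eq_iff, hab, hac, hae, hbc, hbe, hce, hab.symm, hac.symm, hae.symm, hbc.symm, hbe.symm, hce.symm]),
        Finset.card_insert_of_notMem (by simp [Sym2.eq_iff, hab, hac, hae, hbc, hbe, hce, hab.symm, hac.symm, hae.symm, hbc.symm, hbe.symm, hce.symm]),
        Finset.card_insert_of_notMem (by simp [Sym2.eq_iff, hab, hac, hae, hbc, hbe, hce, hab.symm, hac.symm, hae.symm, hbc.symm, hbe.symm, hce.symm]),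
        Finset.card_insert_of_notMem (by simp [Sym2.eq_iff, hab, hac, hae, hbc, hbe, hce, hab.symm, hac.symm, hae.symm, hbc.symm, hbe.symm, hce.symm]), Finset.card_singleton]
    exact Or.inr (by rw [hfr, hcardS])
  · have hfr : freq OP s(c, e) = ({s(a, b), s(a, c), s(a, e), s(b, c), s(b, e)} : Finset (Sym2 V)).card :=
      freq_eq_card OP _ _ (mem_ce a b c e hab hac hae hbc hbe hce huniv OP
        h1 h2 h3 h4 h5 h6 h1' h2' h3' h4' h5' h6')
    have hcardS : ({s(a, b), s(a, c), s(a, e), s(b, c), s(b, e)} : Finset (Sym2 V)).card = 5 := by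
      rw [Finset.card_insert_of_notMem (by simp [Sym2.eq_iff, hab, hac, hae, hbc, hbe, hce, hab.symm, hac.symm, hae.symm, hbc.symm, hbe.symm, hce.symm]),
        Finset.card_insert_of_notMem (by simp [Sym2.eq_iff, hab, hac, hae, hbc, hbe, hce, hab.symm, hac.symm, hae.symm, hbc.symm, hbe.symm, hce.symm]),
        Finset.card_insert_of_notMem (by simp [Sym2.eq_iff, hab, hac, hae, hbc, hbe, hce, hab.symm, hac.symm, hae.symm, hbc.symm, hbe.symm, hce.symm]),
        Finset.card_insert_of_notMem (by simp [Sym2.eq_iff, hab, hac, hae, hbc, hbe, hce, hab.symm, hac.symm, hae.symm, hbc.symm, hbe.symm, hce.symm]), Finset.card_singleton]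
    have hfin := hfr.trans hcardS
    omega
  · have hfr : freq OP s(e, a) = ({s(a, b), s(b, c), s(c, e)} : Finset (Sym2 V)).card :=
      freq_eq_card OP _ _ (mem_ea a b c e hab hac hae hbc hbe hce huniv OP
        h1 h2 h3 h4 h5 h6 h1' h2' h3' h4' h5' h6')
    have hcardS : ({s(a, b), s(b, c), s(c, e)} : Finset (Sym2 V)).card = 3 := by
      rw [Finset.card_insert_of_notMem (by simp [Sym2.eq_iff, hab, hac, hae, hbc, hbe, hce, hab.symm, hac.symm, hae.symm, hbc.symm, hbe.symm, hce.symm]),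
        Finset.card_insert_of_notMem (by simp [Sym2.eq_iff, hab, hac, hae, hbc, hbe, hce, hab.symm, hac.symm, hae.symm, hbc.symm, hbe.symm, hce.symm]), Finset.card_singleton]
    exact Or.inl (by rw [hfr, hcardS])
  · have hfr : freq OP s(e, a) = ({s(a, b), s(b, c), s(c, e)} : Finset (Sym2 V)).card :=
      freq_eq_card OP _ _ (mem_ea a b c e hab hac hae hbc hbe hce huniv OP
        h1 h2 h3 h4 h5 h6 h1' h2' h3' h4' h5' h6')
    have hcardS : ({s(a, b), s(b, c), s(c, e)} : Finset (Sym2 V)).card = 3 := by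
      rw [Finset.card_insert_of_notMem (by simp [Sym2.eq_iff, hab, hac, hae, hbc, hbe, hce, hab.symm, hac.symm, hae.symm, hbc.symm, hbe.symm, hce.symm]),
        Finset.card_insert_of_notMem (by simp [Sym2.eq_iff, hab, hac, hae, hbc, hbe, hce, hab.symm, hac.symm, hae.symm, hbc.symm, hbe.symm, hce.symm]), Finset.card_singleton]
    have hfin := hfr.trans hcardS
    omega
  · have hfr : freq OP s(a, c) = ({s(b, e)} : Finset (Sym2 V)).card :=
      freq_eq_card OP _ _ (mem_ac a b c e hab hac hae hbc hbe hce huniv OP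
        h1 h2 h3 h4 h5 h6 h1' h2' h3' h4' h5' h6')
    have hcardS : ({s(b, e)} : Finset (Sym2 V)).card = 1 := Finset.card_singleton _
    rw [hfr, hcardS]
  · have hfr : freq OP s(b, e) = ({s(a, c)} : Finset (Sym2 V)).card :=
      freq_eq_card OP _ _ (mem_be a b c e hab hac hae hbc hbe hce huniv OP
        h1 h2 h3 h4 h5 h6 h1' h2' h3' h4' h5' h6')
    have hcardS : ({s(a, c)} : Finset (Sym2 V)).card = 1 := Finset.card_singleton _
    rw [hfr, hcardS]
end
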